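/- arXiv:1402.5377 — 7 statements merged into one kernel-verified Lean document; each statement's English description precedes it below -/
import Mathlib

section
/- If h : ℝ → ℝ is even and continuous with h(y)/y² integrable appropriately, and H(c) = ∫_{-c}^{c} c·h(y)/(y²·√(c²−y²)) dy is constant for all c > 0, then h ≡ 0. -/
open MeasureTheory intervalIntegral Real

open Set

lemma aux_int_left (a b : ℝ) :
    IntervalIntegrable (fun c => ((c - a) ^ (-(1/2) : ℝ))) volume a b := by
  simpa using (intervalIntegrable_rpow' (a := 0) (b := b - a)
    (r := (-(1/2) : ℝ)) (by norm_num)).comp_sub_right a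

lemma aux_int_right (a b : ℝ) :
    IntervalIntegrable (fun c => ((b - c) ^ (-(1/2) : ℝ))) volume a b := by
  simpa using ((intervalIntegrable_rpow' (a := b - a) (b := b - b)
    (r := (-(1/2) : ℝ)) (by norm_num)).comp_sub_left b)

lemma rpow_neg_half (x : ℝ) (hx : 0 ≤ x) : x ^ (-(1/2) : ℝ) = (Real.sqrt x)⁻¹ := by
  rw [Real.rpow_neg hx, Real.sqrt_eq_rpow]

set_option maxHeartbeats 1000000 in
lemma kernel_integrable {a b : ℝ} (ha : 0 ≤ a) (hab : a < b) :
    IntervalIntegrable (fun c => c / (Real.sqrt (c^2 - a^2) * Real.sqrt (b^2 - c^2)))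
      volume a b := by
  have hb : 0 < b := lt_of_le_of_lt ha hab
  obtain ⟨m, ham, hmb⟩ : ∃ m, a < m ∧ m < b := ⟨(a + b) / 2, by linarith, by linarith⟩
  have hs1 : 0 < Real.sqrt (b^2 - m^2) := Real.sqrt_pos.2 (by nlinarith)
  have hs2 : 0 < Real.sqrt (m^2 - a^2) := Real.sqrt_pos.2 (by nlinarith)
  obtain ⟨C1, hC1⟩ : ∃ x, x = Real.sqrt b / Real.sqrt (b^2 - m^2) := ⟨_, rfl⟩
  obtain ⟨C2, hC2⟩ : ∃ x, x = b / (Real.sqrt (m^2 - a^2) * Real.sqrt b) := ⟨_, rfl⟩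
  have hC1n : 0 ≤ C1 := by rw [hC1]; positivity
  have hC2n : 0 ≤ C2 := by rw [hC2]; positivity
  have hmeas : Measurable (fun c => c / (Real.sqrt (c^2 - a^2) * Real.sqrt (b^2 - c^2))) := by
    fun_prop
  have hg : IntervalIntegrable
      (fun c => C1 * ((c - a) ^ (-(1/2) : ℝ)) + C2 * ((b - c) ^ (-(1/2) : ℝ))) volume a b :=
    ((aux_int_left a b).const_mul C1).add ((aux_int_right a b).const_mul C2)
  refine hg.mono_fun hmeas.aestronglyMeasurable ?_
  rw [Filter.EventuallyLE, ae_restrict_iff' measurableSet_uIoc]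
  refine Filter.Eventually.of_forall (fun c hc => ?_)
  rw [uIoc_of_le hab.le] at hc
  obtain ⟨hc1, hc2⟩ := hc
  have hca : 0 < c - a := by linarith
  have hbc : 0 ≤ b - c := by linarith
  have hcpos : 0 < c := lt_of_le_of_lt ha hc1
  have hnonneg : 0 ≤ c / (Real.sqrt (c^2 - a^2) * Real.sqrt (b^2 - c^2)) := by positivity
  have hRHSnn : 0 ≤ C1 * ((c - a) ^ (-(1/2) : ℝ)) + C2 * ((b - c) ^ (-(1/2) : ℝ)) := by
    have h1 : (0:ℝ) ≤ (c - a) ^ (-(1/2) : ℝ) := Real.rpow_nonneg hca.le _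
    have h2 : (0:ℝ) ≤ (b - c) ^ (-(1/2) : ℝ) := Real.rpow_nonneg hbc _
    positivity
  rw [Real.norm_eq_abs, Real.norm_eq_abs, abs_of_nonneg hnonneg, abs_of_nonneg hRHSnn]
  have hsplit1 : Real.sqrt (c^2 - a^2) = Real.sqrt (c - a) * Real.sqrt (c + a) := by
    rw [← Real.sqrt_mul hca.le]; ring_nf
  have hsplit2 : Real.sqrt (b^2 - c^2) = Real.sqrt (b - c) * Real.sqrt (b + c) := by
    rw [← Real.sqrt_mul hbc]; ring_nf
  rcases le_or_gt c m with hcm | hcm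
  · -- bound by the C1 term
    have key : c / (Real.sqrt (c^2 - a^2) * Real.sqrt (b^2 - c^2))
        ≤ C1 * ((c - a) ^ (-(1/2) : ℝ)) := by
      have hR : C1 * ((c - a) ^ (-(1/2) : ℝ))
          = Real.sqrt b / (Real.sqrt (b^2 - m^2) * Real.sqrt (c - a)) := by
        rw [rpow_neg_half _ hca.le, hC1, ← div_eq_mul_inv, div_div]
      have p1 : 0 < Real.sqrt (c^2 - a^2) := Real.sqrt_pos.2 (by nlinarith)
      have p2 : 0 < Real.sqrt (b^2 - c^2) := Real.sqrt_pos.2 (by nlinarith)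
      rw [hR, div_le_div_iff₀ (mul_pos p1 p2) (by positivity)]
      have f1 : Real.sqrt (b^2 - m^2) ≤ Real.sqrt (b^2 - c^2) :=
        Real.sqrt_le_sqrt (by nlinarith)
      have f2 : c ≤ Real.sqrt b * Real.sqrt (c + a) := by
        have e1 : Real.sqrt c ≤ Real.sqrt b := Real.sqrt_le_sqrt hc2
        have e2 : Real.sqrt c ≤ Real.sqrt (c + a) := Real.sqrt_le_sqrt (by linarith)
        nlinarith [Real.sq_sqrt hcpos.le, Real.sqrt_nonneg c]
      have f3 : c * Real.sqrt (b^2 - m^2)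
          ≤ (Real.sqrt b * Real.sqrt (c + a)) * Real.sqrt (b^2 - c^2) :=
        mul_le_mul f2 f1 hs1.le (by positivity)
      have f4 := mul_le_mul_of_nonneg_right f3 (Real.sqrt_nonneg (c - a))
      calc c * (Real.sqrt (b^2 - m^2) * Real.sqrt (c - a))
          = c * Real.sqrt (b^2 - m^2) * Real.sqrt (c - a) := by ring
        _ ≤ (Real.sqrt b * Real.sqrt (c + a)) * Real.sqrt (b^2 - c^2) * Real.sqrt (c - a) := f4
        _ = Real.sqrt b * (Real.sqrt (c - a) * Real.sqrt (c + a) * Real.sqrt (b^2 - c^2)) := by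
            ring
        _ = Real.sqrt b * (Real.sqrt (c^2 - a^2) * Real.sqrt (b^2 - c^2)) := by rw [hsplit1]
    have h2 : (0:ℝ) ≤ C2 * ((b - c) ^ (-(1/2) : ℝ)) :=
      mul_nonneg hC2n (Real.rpow_nonneg hbc _)
    linarith
  · -- bound by the C2 term
    have key : c / (Real.sqrt (c^2 - a^2) * Real.sqrt (b^2 - c^2))
        ≤ C2 * ((b - c) ^ (-(1/2) : ℝ)) := by
      have hR : C2 * ((b - c) ^ (-(1/2) : ℝ))
          = b / (Real.sqrt (m^2 - a^2) * Real.sqrt b * Real.sqrt (b - c)) := by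
        rw [rpow_neg_half _ hbc, hC2, ← div_eq_mul_inv, div_div]
      rcases eq_or_lt_of_le hc2 with hcb | hcb
      · have : Real.sqrt (b^2 - c^2) = 0 := by rw [hcb]; simp
        rw [this, mul_zero, div_zero]
        exact mul_nonneg hC2n (Real.rpow_nonneg hbc _)
      have p1 : 0 < Real.sqrt (c^2 - a^2) := Real.sqrt_pos.2 (by nlinarith)
      have p2 : 0 < Real.sqrt (b^2 - c^2) := Real.sqrt_pos.2 (by nlinarith)
      rw [hR, div_le_div_iff₀ (mul_pos p1 p2)
        (mul_pos (mul_pos hs2 (Real.sqrt_pos.2 hb)) (Real.sqrt_pos.2 (by linarith)))]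
      have g1 : Real.sqrt (m^2 - a^2) ≤ Real.sqrt (c^2 - a^2) :=
        Real.sqrt_le_sqrt (by nlinarith)
      have g2 : Real.sqrt b ≤ Real.sqrt (b + c) := Real.sqrt_le_sqrt (by linarith)
      have g3 : c * Real.sqrt (m^2 - a^2) ≤ b * Real.sqrt (c^2 - a^2) :=
        mul_le_mul hc2 g1 hs2.le hb.le
      have g4 : c * Real.sqrt (m^2 - a^2) * Real.sqrt b
          ≤ b * Real.sqrt (c^2 - a^2) * Real.sqrt (b + c) :=
        mul_le_mul g3 g2 (Real.sqrt_nonneg b) (by positivity)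
      have g5 := mul_le_mul_of_nonneg_right g4 (Real.sqrt_nonneg (b - c))
      calc c * (Real.sqrt (m^2 - a^2) * Real.sqrt b * Real.sqrt (b - c))
          = c * Real.sqrt (m^2 - a^2) * Real.sqrt b * Real.sqrt (b - c) := by ring
        _ ≤ b * Real.sqrt (c^2 - a^2) * Real.sqrt (b + c) * Real.sqrt (b - c) := g5
        _ = b * (Real.sqrt (c^2 - a^2) * (Real.sqrt (b - c) * Real.sqrt (b + c))) := by ring
        _ = b * (Real.sqrt (c^2 - a^2) * Real.sqrt (b^2 - c^2)) := by rw [← hsplit2]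
    have h1 : (0:ℝ) ≤ C1 * ((c - a) ^ (-(1/2) : ℝ)) :=
      mul_nonneg hC1n (Real.rpow_nonneg hca.le _)
    linarith

set_option maxHeartbeats 1000000 in
lemma kernel_deriv {a b c : ℝ} (ha : 0 ≤ a) (hab : a < b) (hc1 : a < c) (hc2 : c < b) :
    HasDerivAt (fun x => (1/2) * Real.arcsin ((2*x^2 - b^2 - a^2)/(b^2 - a^2)))
      (c / (Real.sqrt (c^2 - a^2) * Real.sqrt (b^2 - c^2))) c := by
  have hb : 0 < b := lt_of_le_of_lt ha hab
  have hba : 0 < b^2 - a^2 := by nlinarith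
  set u : ℝ := (2*c^2 - b^2 - a^2)/(b^2 - a^2) with hu
  have hu1 : -1 < u := by
    rw [hu, lt_div_iff₀ hba]; nlinarith
  have hu2 : u < 1 := by
    rw [hu, div_lt_iff₀ hba]; nlinarith
  have hinner : HasDerivAt (fun x => (2*x^2 - b^2 - a^2)/(b^2 - a^2)) (4*c/(b^2 - a^2)) c := by
    have h1 : HasDerivAt (fun x : ℝ => 2*x^2 - b^2 - a^2) (4*c) c := by
      have := (((hasDerivAt_pow 2 c).const_mul 2).sub_const (b^2)).sub_const (a^2)
      exact this.congr_deriv (by norm_num; ring)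
    simpa [div_eq_mul_inv] using h1.div_const (b^2 - a^2)
  have harcsin : HasDerivAt Real.arcsin (1 / Real.sqrt (1 - u^2)) u :=
    Real.hasDerivAt_arcsin (ne_of_gt hu1) (ne_of_lt hu2)
  have hcomp := (harcsin.comp c hinner).const_mul (1/2 : ℝ)
  refine hcomp.congr_deriv (Eq.symm ?_)
  have hsq : Real.sqrt (1 - u^2) = 2 * Real.sqrt (c^2 - a^2) * Real.sqrt (b^2 - c^2) / (b^2 - a^2) := by
    have e1 : 1 - u^2 = 4 * ((c^2 - a^2) * (b^2 - c^2)) / (b^2 - a^2)^2 := by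
      rw [hu]; field_simp; ring
    have hca : (0:ℝ) ≤ c^2 - a^2 := by nlinarith
    have hbc : (0:ℝ) ≤ b^2 - c^2 := by nlinarith
    have h2 : (2 * Real.sqrt (c^2-a^2) * Real.sqrt (b^2-c^2) / (b^2-a^2)) ^ 2
        = 4 * ((c^2 - a^2) * (b^2 - c^2)) / (b^2 - a^2)^2 := by
      rw [div_pow, mul_pow, mul_pow, Real.sq_sqrt hca, Real.sq_sqrt hbc]; ring
    rw [e1, ← h2, Real.sqrt_sq (by positivity)]
  rw [hsq]
  have hca' : 0 < Real.sqrt (c^2 - a^2) := Real.sqrt_pos.2 (by nlinarith)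
  have hbc' : 0 < Real.sqrt (b^2 - c^2) := Real.sqrt_pos.2 (by nlinarith)
  field_simp
  ring

lemma kernel_integral {a b : ℝ} (ha : 0 ≤ a) (hab : a < b) :
    (∫ c in a..b, c / (Real.sqrt (c^2 - a^2) * Real.sqrt (b^2 - c^2))) = Real.pi / 2 := by
  have hb : 0 < b := lt_of_le_of_lt ha hab
  have hba : (b:ℝ)^2 - a^2 ≠ 0 := by nlinarith
  have hF : ContinuousOn (fun x => (1/2) * Real.arcsin ((2*x^2 - b^2 - a^2)/(b^2 - a^2)))
      (Set.Icc a b) := by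
    apply Continuous.continuousOn
    exact continuous_const.mul (Real.continuous_arcsin.comp (by continuity))
  rw [intervalIntegral.integral_eq_sub_of_hasDeriv_right_of_le hab.le hF
    (fun c hc => (kernel_deriv ha hab hc.1 hc.2).hasDerivWithinAt)
    (kernel_integrable ha hab)]
  have e1 : (2*b^2 - b^2 - a^2)/(b^2 - a^2) = 1 := by
    rw [div_eq_one_iff_eq hba]; ring
  have e2 : (2*a^2 - b^2 - a^2)/(b^2 - a^2) = -1 := by
    rw [div_eq_iff hba]; ring
  rw [e1, e2, Real.arcsin_one, Real.arcsin_neg, Real.arcsin_one]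
  ring

-- kernel as a function of c, for parameter y, with outer radius R
noncomputable def ker (R y c : ℝ) : ℝ := c / (Real.sqrt (c^2 - y^2) * Real.sqrt (R^2 - c^2))

lemma ker_zero {R y c : ℝ} (hc : 0 < c) (hcy : c ≤ |y|) : ker R y c = 0 := by
  have : c^2 - y^2 ≤ 0 := by
    have := sq_abs y
    nlinarith [abs_nonneg y]
  have hz : Real.sqrt (c^2 - y^2) = 0 := Real.sqrt_eq_zero'.2 this
  rw [ker, hz, zero_mul, div_zero]

lemma ker_intervalIntegrable {R y : ℝ} (hyR : |y| < R) :
    IntervalIntegrable (ker R y) volume 0 R := by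
  have h0y : (0:ℝ) ≤ |y| := abs_nonneg y
  have h1 : IntervalIntegrable (ker R y) volume 0 |y| := by
    apply IntervalIntegrable.congr_ae (f := fun _ => (0:ℝ)) (_root_.intervalIntegrable_const)
    apply Filter.EventuallyEq.symm
    show ∀ᵐ c ∂volume.restrict (Set.uIoc (0:ℝ) |y|), ker R y c = (fun _ => (0:ℝ)) c
    rw [ae_restrict_iff' measurableSet_uIoc]
    refine Filter.Eventually.of_forall (fun c hc => ?_)
    rw [Set.uIoc_of_le h0y] at hc
    exact ker_zero hc.1 hc.2
  have h2 : IntervalIntegrable (ker R y) volume |y| R := by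
    have := kernel_integrable (a := |y|) (b := R) h0y hyR
    simp only [sq_abs] at this; exact this
  exact h1.trans h2

lemma ker_integral {R y : ℝ} (hyR : |y| < R) :
    (∫ c in (0:ℝ)..R, ker R y c) = Real.pi / 2 := by
  have h0y : (0:ℝ) ≤ |y| := abs_nonneg y
  have h1 : IntervalIntegrable (ker R y) volume 0 |y| :=
    ((ker_intervalIntegrable hyR).mono_set (by
      rw [Set.uIcc_of_le h0y, Set.uIcc_of_le (h0y.trans hyR.le)]
      exact Set.Icc_subset_Icc le_rfl hyR.le))
  have h2 : IntervalIntegrable (ker R y) volume |y| R :=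
    ((ker_intervalIntegrable hyR).mono_set (by
      rw [Set.uIcc_of_le hyR.le, Set.uIcc_of_le (h0y.trans hyR.le)]
      exact Set.Icc_subset_Icc h0y le_rfl))
  rw [← intervalIntegral.integral_add_adjacent_intervals h1 h2]
  have e1 : (∫ c in (0:ℝ)..|y|, ker R y c) = 0 := by
    rw [intervalIntegral.integral_of_le h0y]
    apply MeasureTheory.setIntegral_eq_zero_of_forall_eq_zero
    exact fun c hc => ker_zero hc.1 hc.2
  have e2 : (∫ c in |y|..R, ker R y c) = Real.pi / 2 := by
    have := kernel_integral (a := |y|) (b := R) h0y hyR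
    rw [← this]
    apply intervalIntegral.integral_congr
    intro c hc
    simp [ker, sq_abs]
  rw [e1, e2, zero_add]

lemma g_intervalIntegrable (h : ℝ → ℝ) (hcont : Continuous h)
    (hint : ∀ c > (0:ℝ), IntervalIntegrable
      (fun y => c * h y / (y ^ 2 * Real.sqrt (c ^ 2 - y ^ 2))) volume (-c) c)
    {R : ℝ} (hR : 0 < R) :
    IntervalIntegrable (fun y => h y / y ^ 2) volume (-R) R := by
  set c : ℝ := R + 1 with hc
  have hcpos : (0:ℝ) < c := by rw [hc]; linarith
  have hF := hint c hcpos
  have hbig : IntervalIntegrable (fun y => h y / y ^ 2) volume (-c) c := by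
    refine hF.mono_fun ?_ ?_
    · exact ((hcont.measurable).div (measurable_id.pow_const 2)).aestronglyMeasurable
    · rw [Filter.EventuallyLE]
      have hne : ∀ᵐ (x : ℝ) ∂volume, x ≠ c := by
        rw [ae_iff]
        have : {x : ℝ | ¬ x ≠ c} = {c} := by ext x; simp
        rw [this]
        exact Real.volume_singleton
      rw [ae_restrict_iff' measurableSet_uIoc]
      filter_upwards [hne] with y hyne hy
      rw [Set.uIoc_of_le (by linarith : -c ≤ c)] at hy
      rcases eq_or_ne y 0 with rfl | hy0
      · simp
      · have hy2 : 0 < y ^ 2 := by positivity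
        have hyc : |y| < c := by
          rcases hy with ⟨hy1, hy2'⟩
          rw [abs_lt]
          exact ⟨hy1, lt_of_le_of_ne hy2' hyne⟩
        have hs : 0 < Real.sqrt (c ^ 2 - y ^ 2) := by
          apply Real.sqrt_pos.2
          nlinarith [sq_abs y, abs_nonneg y]
        have hsc : Real.sqrt (c ^ 2 - y ^ 2) ≤ c := by
          calc Real.sqrt (c ^ 2 - y ^ 2) ≤ Real.sqrt (c ^ 2) :=
                Real.sqrt_le_sqrt (by nlinarith)
            _ = c := Real.sqrt_sq hcpos.le
        rw [Real.norm_eq_abs, Real.norm_eq_abs, abs_div, abs_div, abs_mul, abs_mul,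
          abs_of_nonneg hy2.le, abs_of_nonneg hcpos.le, abs_of_nonneg hs.le]
        rw [div_le_div_iff₀ (by positivity) (by positivity)]
        nlinarith [abs_nonneg (h y), mul_nonneg (abs_nonneg (h y)) hy2.le]
  exact hbig.mono_set (by
    rw [Set.uIcc_of_le (by linarith : -R ≤ R), Set.uIcc_of_le (by linarith : -c ≤ c)]
    exact Set.Icc_subset_Icc (by linarith) (by linarith))

set_option maxHeartbeats 1000000 in
lemma fubini_key (h : ℝ → ℝ) (hcont : Continuous h)
    (hint : ∀ c > (0:ℝ), IntervalIntegrable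
      (fun y => c * h y / (y ^ 2 * Real.sqrt (c ^ 2 - y ^ 2))) volume (-c) c)
    (K : ℝ)
    (hH : ∀ c > (0:ℝ),
      (∫ y in (-c)..c, c * h y / (y ^ 2 * Real.sqrt (c ^ 2 - y ^ 2))) = K)
    {R : ℝ} (hR : 0 < R) :
    (∫ y in (-R)..R, h y / y ^ 2) = K := by
  set μ : Measure ℝ := volume.restrict (Set.Ioo (0:ℝ) R) with hμ
  set ν : Measure ℝ := volume.restrict (Set.Ioo (-R) R) with hν
  -- the kernel integral over μ equals π/2
  have hker_int : ∀ y : ℝ, |y| < R → IntegrableOn (ker R y) (Set.Ioo (0:ℝ) R) volume := by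
    intro y hy
    exact (((intervalIntegrable_iff_integrableOn_Ioc_of_le hR.le).1
      (ker_intervalIntegrable hy)).mono_set Set.Ioo_subset_Ioc_self)
  have hker_val : ∀ y : ℝ, |y| < R → (∫ c in Set.Ioo (0:ℝ) R, ker R y c) = Real.pi / 2 := by
    intro y hy
    rw [MeasureTheory.setIntegral_congr_set (MeasureTheory.Ioo_ae_eq_Ioc),
      ← intervalIntegral.integral_of_le hR.le]
    exact ker_integral hy
  have hker_nonneg : ∀ y : ℝ, ∀ c ∈ Set.Ioo (0:ℝ) R, 0 ≤ ker R y c := by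
    intro y c hc
    rw [ker]
    exact div_nonneg hc.1.le (by positivity)
  -- product integrability
  have hgR : IntegrableOn (fun y => h y / y ^ 2) (Set.Ioo (-R) R) volume :=
    ((intervalIntegrable_iff_integrableOn_Ioc_of_le (by linarith : -R ≤ R)).1
      (g_intervalIntegrable h hcont hint hR)).mono_set Set.Ioo_subset_Ioc_self
  have habs : ∀ y ∈ Set.Ioo (-R) R, |y| < R := fun y hy => abs_lt.2 ⟨hy.1, hy.2⟩
  have hfm : Measurable (fun p : ℝ × ℝ => (h p.2 / p.2 ^ 2) * ker R p.2 p.1) := by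
    unfold ker
    fun_prop
  have hslice : ∀ y ∈ Set.Ioo (-R) R,
      Integrable (fun c => (h y / y ^ 2) * ker R y c) μ := by
    intro y hy
    exact ((hker_int y (habs y hy)).const_mul _)
  have hprod : Integrable (fun p : ℝ × ℝ => (h p.2 / p.2 ^ 2) * ker R p.2 p.1) (μ.prod ν) := by
    rw [MeasureTheory.integrable_prod_iff' hfm.aestronglyMeasurable]
    constructor
    · rw [hν, ae_restrict_iff' measurableSet_Ioo]
      exact Filter.Eventually.of_forall (fun y hy => hslice y hy)
    · apply MeasureTheory.Integrable.congr ((hgR.abs.mul_const (Real.pi / 2)))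
      refine (ae_restrict_iff' measurableSet_Ioo).mpr (Filter.Eventually.of_forall (fun y hy => ?_))
      show |h y / y ^ 2| * (Real.pi / 2) = ∫ c, ‖(h y / y ^ 2) * ker R y c‖ ∂μ
      have e1 : (∫ c, ‖(h y / y ^ 2) * ker R y c‖ ∂μ)
          = ∫ c in Set.Ioo (0:ℝ) R, |h y / y ^ 2| * ker R y c := by
        rw [hμ]
        apply MeasureTheory.setIntegral_congr_fun measurableSet_Ioo
        intro c hc
        simp only [Real.norm_eq_abs, abs_mul, abs_of_nonneg (hker_nonneg y c hc)]
      rw [e1, MeasureTheory.integral_const_mul, hker_val y (habs y hy)]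
  -- swap
  have hswap := MeasureTheory.integral_integral_swap
    (f := fun c y => (h y / y ^ 2) * ker R y c) (μ := μ) (ν := ν) hprod
  -- LHS equals K * (π/2)
  have hLHS : (∫ c, ∫ y, (h y / y ^ 2) * ker R y c ∂ν ∂μ) = K * (Real.pi / 2) := by
    have hinner : ∀ c ∈ Set.Ioo (0:ℝ) R,
        (∫ y, (h y / y ^ 2) * ker R y c ∂ν) = K * ker R 0 c := by
      intro c hc
      have hc0 : 0 < c := hc.1
      have hcR : c < R := hc.2
      have hptwise : ∀ y : ℝ, (h y / y ^ 2) * ker R y c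
          = (Real.sqrt (R^2 - c^2))⁻¹ * (c * h y / (y ^ 2 * Real.sqrt (c ^ 2 - y ^ 2))) := by
        intro y; rw [ker]; ring
      have e2 : (∫ y, (h y / y ^ 2) * ker R y c ∂ν)
          = (Real.sqrt (R^2 - c^2))⁻¹ *
            ∫ y in Set.Ioo (-R) R, c * h y / (y ^ 2 * Real.sqrt (c ^ 2 - y ^ 2)) := by
        rw [hν]
        simp_rw [hptwise]
        rw [MeasureTheory.integral_const_mul]
      have e3 : (∫ y in Set.Ioo (-R) R, c * h y / (y ^ 2 * Real.sqrt (c ^ 2 - y ^ 2)))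
          = ∫ y in Set.Ioo (-c) c, c * h y / (y ^ 2 * Real.sqrt (c ^ 2 - y ^ 2)) := by
        have hvanish : ∀ y : ℝ, y ∉ Set.Ioo (-c) c →
            c * h y / (y ^ 2 * Real.sqrt (c ^ 2 - y ^ 2)) = 0 := by
          intro y hy
          have hy2 : c ≤ |y| := by
            by_contra hlt
            push_neg at hlt
            exact hy ⟨neg_lt_of_abs_lt hlt, lt_of_abs_lt hlt⟩
          have hle : c ^ 2 - y ^ 2 ≤ 0 := by nlinarith [sq_abs y, abs_nonneg y]
          rw [Real.sqrt_eq_zero'.2 hle, mul_zero, div_zero]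
        rw [show (∫ y in Set.Ioo (-R) R, c * h y / (y ^ 2 * Real.sqrt (c ^ 2 - y ^ 2)))
            = ∫ y in Set.Ioo (-R) R, Set.indicator (Set.Ioo (-c) c)
                (fun y => c * h y / (y ^ 2 * Real.sqrt (c ^ 2 - y ^ 2))) y from
          MeasureTheory.setIntegral_congr_fun measurableSet_Ioo (fun y _ => by
            by_cases hy : y ∈ Set.Ioo (-c) c
            · rw [Set.indicator_of_mem hy]
            · rw [Set.indicator_of_notMem hy]; exact hvanish y hy)]
        rw [MeasureTheory.setIntegral_indicator measurableSet_Ioo,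
          Set.inter_eq_self_of_subset_right (Set.Ioo_subset_Ioo (by linarith) hcR.le)]
      have e4 : (∫ y in Set.Ioo (-c) c, c * h y / (y ^ 2 * Real.sqrt (c ^ 2 - y ^ 2))) = K := by
        rw [MeasureTheory.setIntegral_congr_set (MeasureTheory.Ioo_ae_eq_Ioc),
          ← intervalIntegral.integral_of_le (by linarith : -c ≤ c)]
        exact hH c hc0
      have e5 : (Real.sqrt (R^2 - c^2))⁻¹ = ker R 0 c := by
        rw [ker]
        rw [show c ^ 2 - 0 ^ 2 = c ^ 2 by ring, Real.sqrt_sq hc0.le]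
        have hs : 0 < Real.sqrt (R^2 - c^2) := Real.sqrt_pos.2 (by nlinarith)
        rw [eq_div_iff (by positivity)]
        rw [mul_comm c, ← mul_assoc, inv_mul_cancel₀ hs.ne', one_mul]
      rw [e2, e3, e4, e5]
      ring
    have : (∫ c, ∫ y, (h y / y ^ 2) * ker R y c ∂ν ∂μ)
        = ∫ c in Set.Ioo (0:ℝ) R, K * ker R 0 c := by
      rw [hμ]
      exact MeasureTheory.setIntegral_congr_fun measurableSet_Ioo hinner
    rw [this, MeasureTheory.integral_const_mul, hker_val 0 (by simpa using hR)]
  -- RHS equals (π/2) * ∫ g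
  have hRHS : (∫ y, ∫ c, (h y / y ^ 2) * ker R y c ∂μ ∂ν)
      = (Real.pi / 2) * ∫ y in Set.Ioo (-R) R, h y / y ^ 2 := by
    have hinner : ∀ y ∈ Set.Ioo (-R) R,
        (∫ c, (h y / y ^ 2) * ker R y c ∂μ) = (h y / y ^ 2) * (Real.pi / 2) := by
      intro y hy
      rw [hμ, MeasureTheory.integral_const_mul, hker_val y (habs y hy)]
    rw [hν, MeasureTheory.setIntegral_congr_fun measurableSet_Ioo hinner]
    rw [← MeasureTheory.integral_const_mul]
    apply MeasureTheory.setIntegral_congr_fun measurableSet_Ioo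
    intro y _
    ring
  rw [hLHS, hRHS] at hswap
  have hpi : Real.pi / 2 ≠ 0 := by positivity
  have : (∫ y in Set.Ioo (-R) R, h y / y ^ 2) = K := by
    field_simp at hswap
    nlinarith [Real.pi_pos, hswap]
  rw [intervalIntegral.integral_of_le (by linarith : -R ≤ R),
    ← MeasureTheory.setIntegral_congr_set (MeasureTheory.Ioo_ae_eq_Ioc)]
  exact this

/-- If `h` is even and continuous, the integrand is interval integrable, and
`H(c) = ∫_{-c}^c c·h(y)/(y²√(c²-y²)) dy` is constant for `c > 0`, then `h ≡ 0`
and the constant is `0`. -/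
theorem stmt_0 (h : ℝ → ℝ) (hcont : Continuous h)
    (heven : ∀ y, h (-y) = h y)
    (hint : ∀ c > (0:ℝ), IntervalIntegrable
      (fun y => c * h y / (y ^ 2 * Real.sqrt (c ^ 2 - y ^ 2))) volume (-c) c)
    (K : ℝ)
    (hH : ∀ c > (0:ℝ),
      (∫ y in (-c)..c, c * h y / (y ^ 2 * Real.sqrt (c ^ 2 - y ^ 2))) = K) :
    (∀ y, h y = 0) ∧ K = 0 := by
  have hA : ∀ R > (0:ℝ), (∫ y in (-R)..R, h y / y ^ 2) = K :=
    fun R hR => fubini_key h hcont hint K hH hR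
  have hgint : ∀ a b : ℝ, IntervalIntegrable (fun y => h y / y ^ 2) volume a b := by
    intro a b
    have hM : 0 < max 1 (max |a| |b|) := lt_of_lt_of_le one_pos (le_max_left _ _)
    refine (g_intervalIntegrable h hcont hint hM).mono_set ?_
    have h1 : -(max 1 (max |a| |b|)) ≤ a := by
      have := (abs_le.1 (le_refl |a|)).1
      have h2 : |a| ≤ max 1 (max |a| |b|) := le_trans (le_max_left _ _) (le_max_right _ _)
      nlinarith [neg_abs_le a]
    have h2 : b ≤ max 1 (max |a| |b|) :=
      le_trans (le_abs_self b) (le_trans (le_max_right _ _) (le_max_right _ _))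
    have h3 : a ≤ max 1 (max |a| |b|) :=
      le_trans (le_abs_self a) (le_trans (le_max_left _ _) (le_max_right _ _))
    have h4 : -(max 1 (max |a| |b|)) ≤ b := by
      have h5 : |b| ≤ max 1 (max |a| |b|) := le_trans (le_max_right _ _) (le_max_right _ _)
      nlinarith [neg_abs_le b]
    exact Set.uIcc_subset_uIcc (by rw [Set.uIcc_of_le (by linarith)]; exact ⟨h1, h3⟩)
      (by rw [Set.uIcc_of_le (by linarith)]; exact ⟨h4, h2⟩)
  -- for 0 < a < b, the integral of g over [a,b] vanishes
  have hzero : ∀ a b : ℝ, 0 < a → a < b → (∫ y in a..b, h y / y ^ 2) = 0 := by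
    intro a b ha hab
    have hsplit : (∫ y in (-b)..b, h y / y ^ 2)
        = (∫ y in (-b)..(-a), h y / y ^ 2) + (∫ y in (-a)..a, h y / y ^ 2)
          + (∫ y in a..b, h y / y ^ 2) := by
      rw [intervalIntegral.integral_add_adjacent_intervals (hgint _ _) (hgint _ _),
        intervalIntegral.integral_add_adjacent_intervals (hgint _ _) (hgint _ _)]
    have hrefl : (∫ y in (-b)..(-a), h y / y ^ 2) = (∫ y in a..b, h y / y ^ 2) := by
      rw [← intervalIntegral.integral_comp_neg (fun y => h y / y ^ 2)]
      apply intervalIntegral.integral_congr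
      intro y _
      simp [heven y]
    rw [hA b (by linarith), hA a ha, hrefl] at hsplit
    linarith [hsplit]
  -- h vanishes on positive reals
  have hpos : ∀ x : ℝ, 0 < x → h x = 0 := by
    intro x hx
    by_contra hhx
    set g : ℝ → ℝ := fun y => h y / y ^ 2 with hg
    have hgx : g x ≠ 0 := by
      rw [hg]
      simp only []
      exact div_ne_zero hhx (by positivity)
    have hgc : ContinuousAt g x := by
      apply ContinuousAt.div (hcont.continuousAt) (continuousAt_id.pow 2)
      exact pow_ne_zero 2 hx.ne'
    have hε : 0 < |g x| / 2 := by positivity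
    obtain ⟨δ, hδpos, hδ⟩ := Metric.continuousAt_iff.1 hgc (|g x| / 2) hε
    set r : ℝ := min (δ / 2) (x / 2) with hr
    have hrpos : 0 < r := lt_min (by linarith) (by linarith)
    have hsub : ∀ y ∈ Set.Icc (x - r) (x + r), |g y - g x| < |g x| / 2 := by
      intro y hy
      apply hδ
      rw [Real.dist_eq, abs_sub_lt_iff]
      have h1 : r ≤ δ / 2 := min_le_left _ _
      constructor <;> [skip; skip] <;>
        · rcases hy with ⟨hy1, hy2⟩; linarith
    have hIab : 0 < x - r := by
      have : r ≤ x / 2 := min_le_right _ _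
      linarith
    have hint0 : (∫ y in (x - r)..(x + r), g y) = 0 := hzero _ _ hIab (by linarith)
    rcases lt_or_gt_of_ne hgx with hneg | hposx
    · -- g x < 0 : integral is strictly negative
      have habs : |g x| = -(g x) := abs_of_neg hneg
      have hub : ∀ y ∈ Set.Icc (x - r) (x + r), g y ≤ g x / 2 := by
        intro y hy
        have := hsub y hy
        rw [habs] at this
        have := (abs_sub_lt_iff.1 this).1
        linarith
      have hle : (∫ y in (x - r)..(x + r), g y) ≤ ∫ y in (x - r)..(x + r), g x / 2 := by
        apply intervalIntegral.integral_mono_on (by linarith) (hgint _ _)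
          intervalIntegrable_const hub
      rw [hint0, intervalIntegral.integral_const] at hle
      have : (0:ℝ) < (x + r - (x - r)) * (-(g x) / 2) := by
        apply mul_pos (by linarith)
        linarith
      simp only [smul_eq_mul] at hle
      nlinarith
    · have hub : ∀ y ∈ Set.Icc (x - r) (x + r), g x / 2 ≤ g y := by
        intro y hy
        have := hsub y hy
        rw [abs_of_pos hposx] at this
        have := (abs_sub_lt_iff.1 this).2
        linarith
      have hle : (∫ y in (x - r)..(x + r), g x / 2) ≤ ∫ y in (x - r)..(x + r), g y := by
        apply intervalIntegral.integral_mono_on (by linarith) intervalIntegrable_const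
          (hgint _ _) hub
      rw [hint0, intervalIntegral.integral_const] at hle
      simp only [smul_eq_mul] at hle
      nlinarith
  have hall : ∀ y, h y = 0 := by
    intro y
    rcases lt_trichotomy y 0 with hy | rfl | hy
    · have := hpos (-y) (by linarith)
      rw [heven y] at this  -- h (-y) = h y
      exact this
    · -- continuity at 0
      have h1 : Filter.Tendsto h (nhdsWithin 0 (Set.Ioi 0)) (nhds (h 0)) :=
        (hcont.tendsto 0).mono_left nhdsWithin_le_nhds
      have h2 : Filter.Tendsto h (nhdsWithin 0 (Set.Ioi 0)) (nhds 0) := by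
        apply Filter.Tendsto.congr' _ tendsto_const_nhds
        filter_upwards [self_mem_nhdsWithin] with x hx
        exact (hpos x hx).symm
      exact tendsto_nhds_unique h1 h2
    · exact hpos y hy
  refine ⟨hall, ?_⟩
  have := hA 1 one_pos
  rw [← this]
  apply (intervalIntegral.integral_congr (g := fun _ => (0:ℝ)) (fun y _ => by
    rw [hall y]; simp)).trans
  simp
end

section
/- For any a > 0 and continuous even function h with h(y)/y² integrable near 0, the double integral identity ∫₀ᵃ (1/√(a²−t²)) · (∫₀ᵗ 2t·h(s)/(s²·√(t²−s²)) ds) dt = π·∫₀ᵃ h(s)/s² ds holds; in particular, with H(t) = ∫_{-t}^{t} t·h(y)/(y²·√(t²−y²)) dy, one has ∫₀ᵃ H(t)/√(a²−t²) dt = π·∫₀ᵃ h(s)/s² ds. -/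
/-!
Write the inner integrand as `h s / s² * K(s, t)` with `K(s, t) = 2t / (√(t² - s²) √(a² - t²))`.
By Fubini the left side becomes `∫₀ᵃ h s / s² (∫ₛᵃ K(s, t) dt) ds`, and for every `0 < s < a`
the inner integral is `π`: `arcsin ((2t² - s² - a²) / (a² - s²))` is an antiderivative of `K(s, ·)`
running from `-π/2` to `π/2`. Since `K ≥ 0`, the same computation gives the integrability needed
for Fubini. The symmetric form follows because the integrand in `y` is even.
-/

open MeasureTheory intervalIntegral Real Set Function

-- Through `√x = 0` for `x ≤ 0` and `x / 0 = 0`, the kernel vanishes for `t² ≤ s²`, so the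
-- triangle `0 < s < t < a` can be integrated as the square `(0, a)²`.
noncomputable def abelKernel (a s t : ℝ) : ℝ := 2 * t / (√(t ^ 2 - s ^ 2) * √(a ^ 2 - t ^ 2))

section AbelKernel

variable {a s t : ℝ}

lemma abelKernel_nonneg (ht : 0 ≤ t) : 0 ≤ abelKernel a s t := by
  unfold abelKernel
  positivity

lemma measurable_uncurry_abelKernel (a : ℝ) : Measurable (uncurry (abelKernel a)) := by
  unfold uncurry abelKernel
  fun_prop

lemma abelKernel_eq_zero_of_sq_le (hts : t ^ 2 ≤ s ^ 2) : abelKernel a s t = 0 := by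
  simp [abelKernel, Real.sqrt_eq_zero'.mpr (sub_nonpos.mpr hts)]

lemma abelKernel_eq_zero_of_le (ht : 0 ≤ t) (hts : t ≤ s) : abelKernel a s t = 0 :=
  abelKernel_eq_zero_of_sq_le (pow_le_pow_left₀ ht hts 2)

/-- `X = (2t² - s² - a²)/(a² - s²)` maps `[s, a]` onto `[-1, 1]`, and
`1 - X² = 4 (t² - s²)(a² - t²)/(a² - s²)²`. -/
lemma hasDerivAt_arcsin_abelKernel (hs : 0 ≤ s) (hst : s < t) (hta : t < a) :
    HasDerivAt (fun u => arcsin ((2 * u ^ 2 - s ^ 2 - a ^ 2) / (a ^ 2 - s ^ 2)))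
      (abelKernel a s t) t := by
  have hts : 0 < t ^ 2 - s ^ 2 := by nlinarith
  have hat : 0 < a ^ 2 - t ^ 2 := by nlinarith
  have has : 0 < a ^ 2 - s ^ 2 := by linarith
  set X := (2 * t ^ 2 - s ^ 2 - a ^ 2) / (a ^ 2 - s ^ 2)
  have hX : HasDerivAt (fun u => (2 * u ^ 2 - s ^ 2 - a ^ 2) / (a ^ 2 - s ^ 2))
      (4 * t / (a ^ 2 - s ^ 2)) t := by
    refine ((((hasDerivAt_pow 2 t).const_mul 2).sub_const (s ^ 2)).sub_const (a ^ 2)).div_const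
      (a ^ 2 - s ^ 2) |>.congr_deriv ?_
    ring
  have hX1 : X < 1 := by rw [div_lt_one has]; linarith
  have hX1' : -1 < X := by rw [lt_div_iff₀ has]; linarith
  have hsqrt : √(1 - X ^ 2) = 2 * √(t ^ 2 - s ^ 2) * √(a ^ 2 - t ^ 2) / (a ^ 2 - s ^ 2) := by
    have hpos : 0 ≤ 2 * √(t ^ 2 - s ^ 2) * √(a ^ 2 - t ^ 2) / (a ^ 2 - s ^ 2) := by positivity
    rw [← Real.sqrt_sq hpos]
    congr 1
    simp only [X, div_pow, mul_pow, Real.sq_sqrt hts.le, Real.sq_sqrt hat.le]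
    field_simp
    ring
  refine ((hasDerivAt_arcsin hX1'.ne' hX1.ne).comp t hX).congr_deriv ?_
  rw [hsqrt, abelKernel]
  field_simp
  ring

lemma integrableOn_abelKernel (hs : 0 ≤ s) :
    IntegrableOn (abelKernel a s) (Ioc s a) :=
  integrableOn_deriv_of_nonneg (by fun_prop)
    (fun _ ht => hasDerivAt_arcsin_abelKernel hs ht.1 ht.2)
    (fun _ ht => abelKernel_nonneg (hs.trans ht.1.le))

lemma integral_abelKernel (hs : 0 ≤ s) (hsa : s < a) : ∫ t in s..a, abelKernel a s t = π := by
  have has : a ^ 2 - s ^ 2 ≠ 0 := by nlinarith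
  rw [integral_eq_sub_of_hasDerivAt_of_le hsa.le (by fun_prop)
    (fun _ ht => hasDerivAt_arcsin_abelKernel hs ht.1 ht.2)
    ((intervalIntegrable_iff_integrableOn_Ioc_of_le hsa.le).mpr (integrableOn_abelKernel hs))]
  have h1 : (2 * a ^ 2 - s ^ 2 - a ^ 2) / (a ^ 2 - s ^ 2) = 1 := by field_simp; ring
  have h2 : (2 * s ^ 2 - s ^ 2 - a ^ 2) / (a ^ 2 - s ^ 2) = -1 := by field_simp; ring
  rw [h1, h2, arcsin_one, arcsin_neg_one]
  ring

lemma integrableOn_Ioo_zero_abelKernel (hs : 0 ≤ s) :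
    IntegrableOn (abelKernel a s) (Ioo 0 a) :=
  ((integrableOn_abelKernel hs).mono_set Ioo_subset_Ioc_self).of_forall_sdiff_eq_zero
    measurableSet_Ioo fun _ ht =>
      abelKernel_eq_zero_of_le ht.1.1.le (not_lt.mp fun hst => ht.2 ⟨hst, ht.1.2⟩)

lemma setIntegral_Ioo_zero_abelKernel (hs : 0 ≤ s) (hsa : s < a) :
    ∫ t in Ioo 0 a, abelKernel a s t = π := by
  rw [setIntegral_eq_of_subset_of_forall_sdiff_eq_zero measurableSet_Ioo
    (Ioo_subset_Ioo_left hs) fun _ ht =>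
      abelKernel_eq_zero_of_le ht.1.1.le (not_lt.mp fun hst => ht.2 ⟨hst, ht.1.2⟩),
    ← integral_Ioc_eq_integral_Ioo, ← integral_of_le hsa.le, integral_abelKernel hs hsa]

end AbelKernel

theorem integral_integral_mul_eq_mul_integral {α β : Type*} [MeasurableSpace α] [MeasurableSpace β]
    {μ : Measure α} {ν : Measure β} [SFinite μ] [SFinite ν] {g : β → ℝ} {K : β → α → ℝ} {c : ℝ}
    (hg : Integrable g ν) (hK : AEStronglyMeasurable (uncurry K) (ν.prod μ))
    (hK_nonneg : ∀ᵐ y ∂ν, 0 ≤ᵐ[μ] K y) (hK_int : ∀ᵐ y ∂ν, Integrable (K y) μ)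
    (hK_mass : ∀ᵐ y ∂ν, ∫ x, K y x ∂μ = c) :
    ∫ x, ∫ y, g y * K y x ∂ν ∂μ = c * ∫ y, g y ∂ν := by
  have hF : Integrable (uncurry fun y x => g y * K y x) (ν.prod μ) := by
    refine (integrable_prod_iff (hg.aestronglyMeasurable.comp_fst.mul hK)).mpr ⟨?_, ?_⟩
    · filter_upwards [hK_int] with y hy using hy.const_mul (g y)
    · refine (hg.norm.mul_const c).congr ?_
      filter_upwards [hK_nonneg, hK_mass] with y hy hc
      rw [← hc, ← MeasureTheory.integral_const_mul]
      refine integral_congr_ae ?_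
      filter_upwards [hy] with x hx
      simp [norm_mul, Real.norm_of_nonneg hx]
  rw [← integral_integral_swap hF, ← MeasureTheory.integral_const_mul]
  refine integral_congr_ae ?_
  filter_upwards [hK_mass] with y hc
  rw [MeasureTheory.integral_const_mul, hc, mul_comm]

theorem integral_neg_to_self_eq_two_smul_of_even {E : Type*} [NormedAddCommGroup E]
    [NormedSpace ℝ E] {f : ℝ → E} (hf : ∀ x, f (-x) = f x) (t : ℝ) :
    ∫ x in -t..t, f x = (2 : ℝ) • ∫ x in 0..t, f x := by
  have hflip : ∫ x in -t..0, f x = ∫ x in 0..t, f x := by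
    simpa [hf] using (integral_comp_neg (a := 0) (b := t) f).symm
  by_cases hint : IntervalIntegrable f volume 0 t
  · have hint' : IntervalIntegrable f volume (-t) 0 := by
      simpa [hf] using (IntervalIntegrable.iff_comp_neg (a := 0) (b := t) |>.mp hint).symm
    rw [← integral_add_adjacent_intervals hint' hint, hflip, two_smul]
  · have hint' : ¬ IntervalIntegrable f volume (-t) t := fun h' =>
      hint (h'.mono_set (uIcc_subset_uIcc_right ((le_total 0 t).elim
        (fun h => mem_uIcc_of_le (neg_nonpos.2 h) h) (fun h => mem_uIcc_of_ge h (neg_nonneg.2 h)))))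
    rw [integral_undef hint, integral_undef hint', smul_zero]

lemma intervalIntegral_div_sqrt_eq_setIntegral_abelKernel {h : ℝ → ℝ} {a t : ℝ}
    (ht : t ∈ Ioo 0 a) :
    (∫ s in 0..t, 2 * t * h s / (s ^ 2 * √(t ^ 2 - s ^ 2))) / √(a ^ 2 - t ^ 2) =
      ∫ s in Ioo 0 a, h s / s ^ 2 * abelKernel a s t := by
  rw [← intervalIntegral.integral_div, integral_of_le ht.1.le,
    setIntegral_eq_of_subset_of_forall_sdiff_eq_zero measurableSet_Ioo (Ioc_subset_Ioo_right ht.2)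
      fun s hs => by
        rw [abelKernel_eq_zero_of_le ht.1.le (not_le.mp fun hst => hs.2 ⟨hs.1.1, hst⟩).le,
          mul_zero]]
  refine setIntegral_congr_fun measurableSet_Ioc fun s _ => ?_
  rw [abelKernel]
  ring

theorem stmt_1_general (h : ℝ → ℝ) (a : ℝ) (ha : 0 < a)
    (heven : ∀ y, h (-y) = h y)
    (hint : IntegrableOn (fun s => h s / s ^ 2) (Set.Ioo 0 a) volume) :
    ((∫ t in (0:ℝ)..a,
        (∫ s in (0:ℝ)..t, 2 * t * h s / (s ^ 2 * Real.sqrt (t ^ 2 - s ^ 2)))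
          / Real.sqrt (a ^ 2 - t ^ 2))
      = Real.pi * ∫ s in (0:ℝ)..a, h s / s ^ 2) ∧
    ((∫ t in (0:ℝ)..a,
        (∫ y in (-t)..t, t * h y / (y ^ 2 * Real.sqrt (t ^ 2 - y ^ 2)))
          / Real.sqrt (a ^ 2 - t ^ 2))
      = Real.pi * ∫ s in (0:ℝ)..a, h s / s ^ 2) := by
  have hmem : ∀ᵐ s ∂volume.restrict (Ioo 0 a), s ∈ Ioo 0 a := ae_restrict_mem measurableSet_Ioo
  have hone_sided : (∫ t in (0:ℝ)..a,
      (∫ s in (0:ℝ)..t, 2 * t * h s / (s ^ 2 * √(t ^ 2 - s ^ 2))) / √(a ^ 2 - t ^ 2)) =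
        π * ∫ s in (0:ℝ)..a, h s / s ^ 2 := by
    rw [integral_of_le ha.le, integral_Ioc_eq_integral_Ioo, integral_of_le ha.le,
      integral_Ioc_eq_integral_Ioo, setIntegral_congr_fun measurableSet_Ioo
        fun t ht => intervalIntegral_div_sqrt_eq_setIntegral_abelKernel ht]
    refine integral_integral_mul_eq_mul_integral hint
      (measurable_uncurry_abelKernel a).aestronglyMeasurable (.of_forall fun _ => ?_) ?_ ?_
    · filter_upwards [hmem] with t ht using abelKernel_nonneg ht.1.le
    · filter_upwards [hmem] with s hs using integrableOn_Ioo_zero_abelKernel hs.1.le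
    · filter_upwards [hmem] with s hs using setIntegral_Ioo_zero_abelKernel hs.1.le hs.2
  refine ⟨hone_sided, hone_sided ▸ integral_congr fun t _ => ?_⟩
  rw [integral_neg_to_self_eq_two_smul_of_even (fun y => by simp [heven]) t, smul_eq_mul,
    ← intervalIntegral.integral_const_mul]
  congr 2 with s
  ring

/-- The Abel-type double integral identity used in Lemma `lem_Besse`. -/
theorem stmt_1 (h : ℝ → ℝ) (a : ℝ) (ha : 0 < a) (hcont : Continuous h)
    (heven : ∀ y, h (-y) = h y)
    (hint : IntegrableOn (fun s => h s / s ^ 2) (Set.Ioo 0 a) volume)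
    (hint2 : ∀ t ∈ Set.Ioo (0:ℝ) a, IntervalIntegrable
      (fun s => 2 * t * h s / (s ^ 2 * Real.sqrt (t ^ 2 - s ^ 2))) volume 0 t)
    (hint3 : IntervalIntegrable
      (fun t => (∫ s in (0:ℝ)..t, 2 * t * h s / (s ^ 2 * Real.sqrt (t ^ 2 - s ^ 2)))
        / Real.sqrt (a ^ 2 - t ^ 2)) volume 0 a)
    (hint4 : IntervalIntegrable
      (fun t => (∫ y in (-t)..t, t * h y / (y ^ 2 * Real.sqrt (t ^ 2 - y ^ 2)))
        / Real.sqrt (a ^ 2 - t ^ 2)) volume 0 a) :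
    ((∫ t in (0:ℝ)..a,
        (∫ s in (0:ℝ)..t, 2 * t * h s / (s ^ 2 * Real.sqrt (t ^ 2 - s ^ 2)))
          / Real.sqrt (a ^ 2 - t ^ 2))
      = Real.pi * ∫ s in (0:ℝ)..a, h s / s ^ 2) ∧
    ((∫ t in (0:ℝ)..a,
        (∫ y in (-t)..t, t * h y / (y ^ 2 * Real.sqrt (t ^ 2 - y ^ 2)))
          / Real.sqrt (a ^ 2 - t ^ 2))
      = Real.pi * ∫ s in (0:ℝ)..a, h s / s ^ 2) :=
  stmt_1_general h a ha heven hint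
end

section
/- For every c > 0, ∫_{-c}^{c} √(c²+1)/((1+y²)·√(c²−y²)) dy = π. -/
open MeasureTheory intervalIntegral Real

/-- For `c > 0`, `∫_{-c}^{c} √(c²+1)/((1+y²)·√(c²−y²)) dy = π`. -/
theorem stmt_4 (c : ℝ) (hc : 0 < c) :
    (∫ y in (-c)..c,
        Real.sqrt (c ^ 2 + 1) / ((1 + y ^ 2) * Real.sqrt (c ^ 2 - y ^ 2)))
      = Real.pi := by
  have hK : (0:ℝ) < Real.sqrt (c ^ 2 + 1) := Real.sqrt_pos.2 (by positivity)
  set K := Real.sqrt (c ^ 2 + 1) with hKdef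
  have hK2 : K ^ 2 = c ^ 2 + 1 := Real.sq_sqrt (by positivity)
  set f : ℝ → ℝ := fun y => K / ((1 + y ^ 2) * Real.sqrt (c ^ 2 - y ^ 2)) with hf
  set F : ℝ → ℝ := fun y => Real.arcsin (K * y / (c * Real.sqrt (1 + y ^ 2))) with hFdef
  have hSpos : ∀ y : ℝ, (0:ℝ) < Real.sqrt (1 + y ^ 2) := fun y => Real.sqrt_pos.2 (by positivity)
  have hcont : Continuous F := by
    apply Real.continuous_arcsin.comp
    exact (continuous_const.mul continuous_id).div
      (continuous_const.mul (Real.continuous_sqrt.comp (by continuity)))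
      (fun y => by have := hSpos y; positivity)
  have hderiv : ∀ y ∈ Set.Ioo (-c) c, HasDerivAt F (f y) y := by
    intro y hy
    have hy2 : y ^ 2 < c ^ 2 := by nlinarith [hy.1, hy.2]
    set S := Real.sqrt (1 + y ^ 2) with hSdef
    have hS : 0 < S := hSpos y
    have hS2 : S ^ 2 = 1 + y ^ 2 := Real.sq_sqrt (by positivity)
    set Q := Real.sqrt (c ^ 2 - y ^ 2) with hQdef
    have hQ : 0 < Q := Real.sqrt_pos.2 (by linarith)
    have hQ2 : Q ^ 2 = c ^ 2 - y ^ 2 := Real.sq_sqrt (by linarith)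
    -- derivative of S
    have hdS : HasDerivAt (fun y : ℝ => Real.sqrt (1 + y ^ 2)) (y / S) y := by
      have h1 : HasDerivAt (fun y : ℝ => 1 + y ^ 2) (2 * y) y := by
        simpa using ((hasDerivAt_pow 2 y).const_add 1)
      have := (Real.hasDerivAt_sqrt (by positivity : (1:ℝ) + y ^ 2 ≠ 0)).comp y h1
      refine this.congr_deriv ?_
      rw [← hSdef]
      field_simp
    -- derivative of inner function g
    have hdg : HasDerivAt (fun y : ℝ => K * y / (c * Real.sqrt (1 + y ^ 2)))
        ((K * (c * S) - K * y * (c * (y / S))) / (c * S) ^ 2) y := by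
      have := ((hasDerivAt_id y).const_mul K).div (hdS.const_mul c)
        (by have := hS; positivity)
      refine this.congr_deriv ?_
      simp [← hSdef]
    -- inner value bounds
    have hg2 : (K * y / (c * S)) ^ 2 = (c ^ 2 + 1) * y ^ 2 / (c ^ 2 * (1 + y ^ 2)) := by
      rw [div_pow, mul_pow, mul_pow, hK2, hS2]
    have hglt : (K * y / (c * S)) ^ 2 < 1 := by
      rw [hg2, div_lt_one (by positivity)]
      nlinarith
    have hne1 : K * y / (c * S) ≠ 1 := fun h => by rw [h] at hglt; norm_num at hglt
    have hnen1 : K * y / (c * S) ≠ -1 := fun h => by rw [h] at hglt; norm_num at hglt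
    have hsub : 1 - (K * y / (c * S)) ^ 2 = (Q / (c * S)) ^ 2 := by
      rw [hg2, div_pow, mul_pow, hQ2]
      field_simp
      linear_combination (c ^ 2 - y ^ 2) * hS2
    have harc := (Real.hasDerivAt_arcsin hnen1 hne1).comp y hdg
    have hnum : K * (c * S) - K * y * (c * (y / S)) = K * c / S := by
      field_simp
      linear_combination hS2
    refine harc.congr_deriv (Eq.symm ?_)
    rw [hsub, Real.sqrt_sq (by positivity), hnum]
    show K / ((1 + y ^ 2) * Q) = 1 / (Q / (c * S)) * (K * c / S / (c * S) ^ 2)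
    rw [one_div, inv_div]
    field_simp
    linear_combination hS2
  have hnonneg : ∀ y : ℝ, 0 ≤ f y := fun y => by
    have := Real.sqrt_nonneg (c ^ 2 - y ^ 2); positivity
  have hmin : min (-c) c = -c := min_eq_left (by linarith)
  have hmax : max (-c) c = c := max_eq_right (by linarith)
  have hint : IntervalIntegrable f volume (-c) c := by
    apply intervalIntegrable_deriv_of_nonneg hcont.continuousOn
    · rw [hmin, hmax]; exact hderiv
    · rw [hmin, hmax]; exact fun x _ => hnonneg x
  have := integral_eq_sub_of_hasDeriv_right_of_le (by linarith : -c ≤ c)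
    hcont.continuousOn (fun x hx => (hderiv x hx).hasDerivWithinAt) hint
  rw [hf] at this
  rw [this]
  have hKc : c * K ≠ 0 := by positivity
  have hFc : F c = π / 2 := by
    rw [hFdef]
    have h1 : K * c / (c * Real.sqrt (1 + c ^ 2)) = 1 := by
      rw [show (1:ℝ) + c ^ 2 = c ^ 2 + 1 by ring, ← hKdef, div_eq_one_iff_eq hKc]
      ring
    simp only [h1, Real.arcsin_one]
  have hFnc : F (-c) = -(π / 2) := by
    rw [hFdef]
    have h1 : K * (-c) / (c * Real.sqrt (1 + (-c) ^ 2)) = -1 := by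
      rw [show (1:ℝ) + (-c) ^ 2 = c ^ 2 + 1 by ring, ← hKdef, div_eq_iff hKc]
      ring
    simp only [h1, Real.arcsin_neg_one]
  rw [hFc, hFnc]; ring
end

section
/- Let h : ℝ → ℝ be continuous. If the function H(c) = ∫₀^c √(c²−1)·h(s)/√(c²−s²) ds is constant on (1, ∞), then that constant is 0. -/
open MeasureTheory intervalIntegral Real

/-- If `H(c) = ∫₀^c √(c²−1)·h(s)/√(c²−s²) ds` is constant on `(1,∞)`,
then that constant is `0`. -/
theorem stmt_5 (h : ℝ → ℝ) (hcont : Continuous h)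
    (hint : ∀ c > (1:ℝ), IntervalIntegrable
      (fun s => Real.sqrt (c ^ 2 - 1) * h s / Real.sqrt (c ^ 2 - s ^ 2)) volume 0 c)
    (K : ℝ)
    (hH : ∀ c > (1:ℝ),
      (∫ s in (0:ℝ)..c, Real.sqrt (c ^ 2 - 1) * h s / Real.sqrt (c ^ 2 - s ^ 2)) = K) :
    K = 0 := by
  -- bound for h on [0,2]
  obtain ⟨M, hM⟩ := (isCompact_Icc (a := (0:ℝ)) (b := 2)).exists_bound_of_continuousOn
    hcont.continuousOn
  have hM0 : 0 ≤ M := le_trans (norm_nonneg _) (hM 0 ⟨le_refl _, by norm_num⟩)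
  -- key estimate
  have key : ∀ c ∈ Set.Ioo (1:ℝ) 2, |K| ≤ Real.sqrt (c ^ 2 - 1) * M * (2 * Real.sqrt c) := by
    intro c hc
    obtain ⟨hc1, hc2⟩ := hc
    have hc0 : (0:ℝ) < c := by linarith
    have hsq : (0:ℝ) < c ^ 2 - 1 := by nlinarith
    -- integrability of comparison function
    have hI : IntervalIntegrable (fun s => Real.sqrt (c ^ 2 - 1) * M * (c - s) ^ (-(1:ℝ)/2))
        volume 0 c := by
      have := (intervalIntegral.intervalIntegrable_rpow' (a := 0) (b := c)
        (r := -(1:ℝ)/2) (by norm_num)).comp_sub_left c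
      simpa using (this.symm.const_mul (Real.sqrt (c ^ 2 - 1) * M))
    -- pointwise bound
    have hpt : ∀ s ∈ Set.Icc (0:ℝ) c,
        |Real.sqrt (c ^ 2 - 1) * h s / Real.sqrt (c ^ 2 - s ^ 2)|
          ≤ Real.sqrt (c ^ 2 - 1) * M * (c - s) ^ (-(1:ℝ)/2) := by
      intro s hs
      obtain ⟨hs0, hsc⟩ := hs
      rcases eq_or_lt_of_le hsc with rfl | hsc'
      · simp [sub_self]
      have hcs : (0:ℝ) < c - s := by linarith
      have hcps : (1:ℝ) ≤ c + s := by linarith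
      have hden : Real.sqrt (c ^ 2 - s ^ 2) = Real.sqrt (c - s) * Real.sqrt (c + s) := by
        rw [← Real.sqrt_mul hcs.le]; ring_nf
      have hdenpos : 0 < Real.sqrt (c ^ 2 - s ^ 2) :=
        Real.sqrt_pos.mpr (by nlinarith)
      have hhs : |h s| ≤ M := hM s ⟨hs0, by linarith⟩
      have hge : Real.sqrt (c - s) ≤ Real.sqrt (c ^ 2 - s ^ 2) := by
        rw [hden]
        nth_rewrite 1 [← mul_one (Real.sqrt (c - s))]
        exact mul_le_mul_of_nonneg_left (by
          rw [show (1:ℝ) = Real.sqrt 1 by simp]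
          exact Real.sqrt_le_sqrt hcps) (Real.sqrt_nonneg _)
      rw [abs_div, abs_mul, abs_of_nonneg (Real.sqrt_nonneg _),
        abs_of_nonneg hdenpos.le]
      have hrpow : (c - s) ^ (-(1:ℝ)/2) = 1 / Real.sqrt (c - s) := by
        rw [show -(1:ℝ)/2 = -(1/2) by norm_num, Real.rpow_neg hcs.le, Real.sqrt_eq_rpow]
        exact (one_div _).symm
      rw [hrpow]
      have h1 : Real.sqrt (c ^ 2 - 1) * |h s| / Real.sqrt (c ^ 2 - s ^ 2)
          ≤ Real.sqrt (c ^ 2 - 1) * M / Real.sqrt (c - s) := by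
        apply div_le_div₀ (by positivity)
          (mul_le_mul_of_nonneg_left hhs (Real.sqrt_nonneg _))
          (Real.sqrt_pos.mpr hcs) hge
      calc Real.sqrt (c ^ 2 - 1) * |h s| / Real.sqrt (c ^ 2 - s ^ 2)
          ≤ Real.sqrt (c ^ 2 - 1) * M / Real.sqrt (c - s) := h1
        _ = Real.sqrt (c ^ 2 - 1) * M * (1 / Real.sqrt (c - s)) := by ring
    -- the comparison integral computes to 2√c
    have hcomp : (∫ s in (0:ℝ)..c, Real.sqrt (c ^ 2 - 1) * M * (c - s) ^ (-(1:ℝ)/2))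
        = Real.sqrt (c ^ 2 - 1) * M * (2 * Real.sqrt c) := by
      rw [intervalIntegral.integral_const_mul]
      congr 1
      have := intervalIntegral.integral_comp_sub_left (a := (0:ℝ)) (b := c)
        (fun t => t ^ (-(1:ℝ)/2)) c
      rw [this, sub_self, sub_zero, integral_rpow (Or.inl (by norm_num))]
      rw [show -(1:ℝ)/2 + 1 = 1/2 by norm_num]
      rw [Real.zero_rpow (by norm_num), Real.sqrt_eq_rpow]
      ring
    rw [← hH c hc1]
    calc |∫ s in (0:ℝ)..c, Real.sqrt (c ^ 2 - 1) * h s / Real.sqrt (c ^ 2 - s ^ 2)|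
        ≤ ∫ s in (0:ℝ)..c, |Real.sqrt (c ^ 2 - 1) * h s / Real.sqrt (c ^ 2 - s ^ 2)| :=
          intervalIntegral.abs_integral_le_integral_abs hc0.le
      _ ≤ ∫ s in (0:ℝ)..c, Real.sqrt (c ^ 2 - 1) * M * (c - s) ^ (-(1:ℝ)/2) :=
          intervalIntegral.integral_mono_on hc0.le ((hint c hc1).abs) hI hpt
      _ = Real.sqrt (c ^ 2 - 1) * M * (2 * Real.sqrt c) := hcomp
  -- the bound tends to 0 as c → 1⁺
  have hten : Filter.Tendsto (fun c : ℝ => Real.sqrt (c ^ 2 - 1) * M * (2 * Real.sqrt c))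
      (nhdsWithin 1 (Set.Ioi 1)) (nhds 0) := by
    have hcont' : Continuous (fun c : ℝ => Real.sqrt (c ^ 2 - 1) * M * (2 * Real.sqrt c)) := by
      continuity
    have := hcont'.tendsto 1
    simp only [one_pow, sub_self, Real.sqrt_zero, zero_mul] at this
    exact this.mono_left nhdsWithin_le_nhds
  have habs : |K| ≤ 0 := by
    refine ge_of_tendsto hten ?_
    filter_upwards [Ioo_mem_nhdsGT_of_mem (show (1:ℝ) ∈ Set.Ico (1:ℝ) 2 by constructor <;> norm_num)]
      with c hc using key c hc
  exact abs_eq_zero.mp (le_antisymm habs (abs_nonneg K))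
end

section
/- Let h : ℝ → ℝ be real-analytic. If ∫₀^c √(c²−1)·h(s)/√(c²−s²) ds is constant on (1, ∞), then h = 0. -/
open MeasureTheory intervalIntegral Real
open Set Filter Topology Metric
open scoped ContDiff

/-!
Substituting `s = c t` turns the integral into `√(c²-1) · g(c)` with
`g(c) = ∫₀¹ h(ct) / √(1-t²) dt`. The function `g` is real-analytic: a real-analytic `h` extends
holomorphically to a neighbourhood of `ℝ` in `ℂ` (glue its local power series by the identity
theorem), and differentiating under the integral sign makes the complexified `g` holomorphic.
Since `g` is continuous at `1`, letting `c → 1⁺` shows that the constant is `0`, so `g` vanishes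
on `(1, ∞)` and hence everywhere. Differentiating `n` times at `c = 0` gives
`g⁽ⁿ⁾(0) = h⁽ⁿ⁾(0) ∫₀¹ tⁿ / √(1-t²) dt` with a positive moment, so every derivative of `h` at
`0` vanishes and `h = 0`.
-/

noncomputable def dilationIntegral {𝕜 : Type*} [RCLike 𝕜] (w : ℝ → 𝕜) (f : 𝕜 → 𝕜) (z : 𝕜) : 𝕜 :=
  ∫ t in (0:ℝ)..1, w t * f (z * t)

section RCLike

variable {𝕜 : Type*} [RCLike 𝕜]

theorem norm_mul_ofReal_le_of_mem_Icc (z : 𝕜) {t : ℝ} (ht : t ∈ Icc (0:ℝ) 1) :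
    ‖z * t‖ ≤ ‖z‖ := by
  rw [norm_mul, RCLike.norm_ofReal, abs_of_nonneg ht.1]
  exact mul_le_of_le_one_right (norm_nonneg z) ht.2

theorem hasDerivAt_dilationIntegral {w : ℝ → 𝕜} (hw : IntervalIntegrable w volume 0 1)
    {f : 𝕜 → 𝕜} {U : Set 𝕜} (hU : IsOpen U) (hf : ContDiffOn 𝕜 1 f U) {z₀ : 𝕜}
    (hz₀ : ∀ t ∈ Icc (0:ℝ) 1, z₀ * t ∈ U) :
    HasDerivAt (dilationIntegral w f) (dilationIntegral (fun t => t * w t) (deriv f) z₀) z₀ := by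
  set K := (fun t : ℝ => z₀ * t) '' Icc 0 1
  have hK : IsCompact K := isCompact_Icc.image (by fun_prop)
  obtain ⟨ε, hε, hεU⟩ := hK.exists_thickening_subset_open hU (by simpa [K, image_subset_iff])
  have hK'U : cthickening (ε / 2) K ⊆ U :=
    (cthickening_subset_thickening' hε (by linarith) K).trans hεU
  have hmem : ∀ z ∈ ball z₀ (ε / 2), ∀ t ∈ Icc (0:ℝ) 1, z * t ∈ cthickening (ε / 2) K := by
    intro z hz t ht
    refine mem_cthickening_of_dist_le _ (z₀ * t) _ _ (mem_image_of_mem _ ht) ?_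
    rw [dist_eq_norm, ← sub_mul]
    exact (norm_mul_ofReal_le_of_mem_Icc _ ht).trans (mem_ball_iff_norm.1 hz).le
  have hf' : ContinuousOn (deriv f) U := hf.continuousOn_deriv_of_isOpen hU le_rfl
  obtain ⟨M, hM⟩ := hK.cthickening.exists_bound_of_continuousOn (hf'.mono hK'U)
  have hcomp : ∀ {g : 𝕜 → 𝕜}, ContinuousOn g U → ∀ z ∈ ball z₀ (ε / 2),
      ContinuousOn (fun t : ℝ => g (z * t)) (uIcc 0 1) := by
    intro g hg z hz
    rw [uIcc_of_le zero_le_one]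
    exact hg.comp (by fun_prop) fun t ht => hK'U (hmem z hz t ht)
  have hball : ball z₀ (ε / 2) ∈ 𝓝 z₀ := ball_mem_nhds z₀ (by linarith)
  have hz₀ball : z₀ ∈ ball z₀ (ε / 2) := mem_ball_self (by linarith)
  have hint : ∀ z ∈ ball z₀ (ε / 2), IntervalIntegrable (fun t => w t * f (z * t)) volume 0 1 :=
    fun z hz => hw.mul_continuousOn (hcomp hf.continuousOn z hz)
  have hint' : IntervalIntegrable (fun t : ℝ => t * w t * deriv f (z₀ * t)) volume 0 1 :=
    (hw.continuousOn_mul (g := fun t : ℝ => (t:𝕜)) (by fun_prop)).mul_continuousOn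
      (hcomp hf' z₀ hz₀ball)
  refine (hasDerivAt_integral_of_dominated_loc_of_deriv_le (F := fun z t => w t * f (z * t))
    (F' := fun z t => t * w t * deriv f (z * t)) (bound := fun t => M * ‖w t‖) hball
    (eventually_of_mem hball fun z hz => (hint z hz).def'.aestronglyMeasurable) (hint z₀ hz₀ball)
    hint'.def'.aestronglyMeasurable ?_ (hw.norm.const_mul M) ?_).2
  · refine ae_of_all _ fun t ht z hz => ?_
    rw [uIoc_of_le zero_le_one] at ht
    have ht' : t ∈ Icc (0:ℝ) 1 := Ioc_subset_Icc_self ht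
    calc ‖(t:𝕜) * w t * deriv f (z * t)‖ = |t| * ‖w t‖ * ‖deriv f (z * t)‖ := by
          rw [norm_mul, norm_mul, RCLike.norm_ofReal]
      _ ≤ 1 * ‖w t‖ * M := by
          gcongr
          · rw [abs_of_nonneg ht'.1]; exact ht'.2
          · exact hM _ (hmem z hz t ht')
      _ = M * ‖w t‖ := by ring
  · refine ae_of_all _ fun t ht z hz => ?_
    rw [uIoc_of_le zero_le_one] at ht
    have hd : HasDerivAt f (deriv f (z * t)) (z * t) :=
      ((hf.differentiableOn one_ne_zero).differentiableAt
        (hU.mem_nhds (hK'U (hmem z hz t (Ioc_subset_Icc_self ht))))).hasDerivAt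
    rw [show (t:𝕜) * w t * deriv f (z * t) = w t * (deriv f (z * t) * t) by ring]
    exact (hd.comp z (hasDerivAt_mul_const (t:𝕜))).const_mul (w t)

theorem dilationIntegral_zero (w : ℝ → 𝕜) (f : 𝕜 → 𝕜) :
    dilationIntegral w f 0 = (∫ t in (0:ℝ)..1, w t) * f 0 := by
  simp [dilationIntegral, intervalIntegral.integral_mul_const]

end RCLike

theorem iteratedDeriv_dilationIntegral {w : ℝ → ℝ} (hw : IntervalIntegrable w volume 0 1)
    {f : ℝ → ℝ} (hf : ContDiff ℝ ∞ f) (n : ℕ) :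
    iteratedDeriv n (dilationIntegral w f) =
      dilationIntegral (fun t => t ^ n * w t) (iteratedDeriv n f) := by
  induction n with
  | zero => simp
  | succ n ih =>
    ext c
    have hfn : ContDiff ℝ ∞ (iteratedDeriv n f) := by
      rw [iteratedDeriv_eq_iterate]; exact hf.iterate_deriv n
    have hwn : IntervalIntegrable (fun t => t ^ n * w t) volume 0 1 :=
      hw.continuousOn_mul (by fun_prop)
    rw [iteratedDeriv_succ, ih, iteratedDeriv_succ,
      (hasDerivAt_dilationIntegral hwn isOpen_univ (hfn.of_le (by simp)).contDiffOn
        fun _ _ => mem_univ _).deriv]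
    congr 1
    ext t
    simp only [RCLike.ofReal_real_eq_id, id]
    ring

theorem AnalyticAt.exists_complex_extension {h : ℝ → ℝ} {x : ℝ} (hx : AnalyticAt ℝ h x) :
    ∃ r > 0, ∃ F : ℂ → ℂ, AnalyticOnNhd ℂ F (ball (x:ℂ) r) ∧
      ∀ y : ℝ, (y:ℂ) ∈ ball (x:ℂ) r → F y = h y := by
  obtain ⟨p, R, hp⟩ := hx
  set q := FormalMultilinearSeries.ofScalars ℂ fun n => (p.coeff n : ℂ)
  have hRq : R ≤ q.radius := hp.r_le.trans <| FormalMultilinearSeries.radius_le_of_le fun n => by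
    simp [q, p.norm_apply_eq_norm_coef]
  obtain ⟨r, hr0, hrR⟩ := ENNReal.lt_iff_exists_nnreal_btwn.1 hp.r_pos
  have hq : HasFPowerSeriesOnBall (fun z => q.sum (z - x)) q x r := by
    simpa using ((q.hasFPowerSeriesOnBall (hp.r_pos.trans_le hRq)).mono (by exact_mod_cast hr0)
      (hrR.le.trans hRq)).comp_sub (x:ℂ)
  refine ⟨r, by exact_mod_cast hr0, _, fun z hz => hq.analyticAt_of_mem ?_, fun y hy => ?_⟩
  · simpa [Metric.eball_coe] using hz
  · have hmem : y - x ∈ eball (0:ℝ) R := by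
      refine eball_subset_eball hrR.le ?_
      rw [Metric.eball_coe, mem_ball_zero_iff, Real.norm_eq_abs]
      simpa [Complex.dist_eq, ← Complex.ofReal_sub] using hy
    have hsum := Complex.ofRealCLM.hasSum (hp.hasSum hmem)
    simp only [add_sub_cancel, Complex.ofRealCLM_apply] at hsum
    rw [FormalMultilinearSeries.sum, ← hsum.tsum_eq]
    congr 1
    ext n
    simp [q, p.apply_eq_pow_smul_coeff, mul_comm]

theorem ofReal_re_mem_ball {c r : ℝ} {z : ℂ} (hz : z ∈ ball (c:ℂ) r) :
    (z.re : ℂ) ∈ ball (c:ℂ) r := by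
  rw [mem_ball, Complex.dist_eq, ← Complex.ofReal_sub, Complex.norm_real, Real.norm_eq_abs]
  exact (Complex.abs_re_le_norm (z - c)).trans_lt (by simpa [Complex.dist_eq] using hz)

theorem eqOn_inter_ball_of_eq_on_real {a b ra rb : ℝ} {F G : ℂ → ℂ}
    (hF : AnalyticOnNhd ℂ F (ball (a:ℂ) ra)) (hG : AnalyticOnNhd ℂ G (ball (b:ℂ) rb))
    (hFG : ∀ y : ℝ, (y:ℂ) ∈ ball (a:ℂ) ra ∩ ball (b:ℂ) rb → F y = G y) :
    EqOn F G (ball (a:ℂ) ra ∩ ball (b:ℂ) rb) := by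
  intro z hz
  -- `z.re` lies in both balls, and `F = G` on the reals near it
  have hV : IsOpen (ball (a:ℂ) ra ∩ ball (b:ℂ) rb) := isOpen_ball.inter isOpen_ball
  have hre : (z.re : ℂ) ∈ ball (a:ℂ) ra ∩ ball (b:ℂ) rb :=
    ⟨ofReal_re_mem_ball hz.1, ofReal_re_mem_ball hz.2⟩
  have hreal : ∀ᶠ y : ℝ in 𝓝[≠] z.re, F y = G y :=
    nhdsWithin_le_nhds <|
      ((Complex.continuous_ofReal.tendsto _).eventually (hV.mem_nhds hre)).mono hFG
  have hfreq : ∃ᶠ w in 𝓝[≠] (z.re : ℂ), F w = G w :=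
    (Complex.continuous_ofReal.continuousWithinAt.tendsto_nhdsWithin fun _ _ => by
      simp_all).frequently hreal.frequently
  exact (hF.mono inter_subset_left).eqOn_of_preconnected_of_frequently_eq
    (hG.mono inter_subset_right)
    ((convex_ball _ _).inter (convex_ball _ _)).isPreconnected hre hfreq hz

theorem exists_complex_extension_of_analyticAt {h : ℝ → ℝ} (hh : ∀ x, AnalyticAt ℝ h x) :
    ∃ U : Set ℂ, ∃ F : ℂ → ℂ, IsOpen U ∧ (∀ x : ℝ, (x:ℂ) ∈ U) ∧ AnalyticOnNhd ℂ F U ∧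
      ∀ x : ℝ, F x = h x := by
  classical
  choose r hr F hF hFh using fun x => (hh x).exists_complex_extension
  have hcons : ∀ a b, EqOn (F a) (F b) (ball (a:ℂ) (r a) ∩ ball (b:ℂ) (r b)) := fun a b =>
    eqOn_inter_ball_of_eq_on_real (hF a) (hF b) fun y hy =>
      (hFh a y hy.1).trans (hFh b y hy.2).symm
  let G z := if hz : ∃ x : ℝ, z ∈ ball (x:ℂ) (r x) then F hz.choose z else 0
  have hG : ∀ x : ℝ, EqOn G (F x) (ball (x:ℂ) (r x)) := fun x z hz => by
    have hex : ∃ x : ℝ, z ∈ ball (x:ℂ) (r x) := ⟨x, hz⟩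
    simp only [G, dif_pos hex]
    exact hcons _ _ ⟨hex.choose_spec, hz⟩
  refine ⟨⋃ x : ℝ, ball (x:ℂ) (r x), G, isOpen_iUnion fun _ => isOpen_ball,
    fun x => mem_iUnion.2 ⟨x, mem_ball_self (hr x)⟩, fun z hz => ?_, fun x => ?_⟩
  · obtain ⟨x, hx⟩ := mem_iUnion.1 hz
    exact (hF x z hx).congr <|
      eventually_of_mem (isOpen_ball.mem_nhds hx) fun w hw => (hG x hw).symm
  · exact (hG x (mem_ball_self (hr x))).trans (hFh x x (mem_ball_self (hr x)))

theorem analyticAt_dilationIntegral {w : ℝ → ℝ} (hw : IntervalIntegrable w volume 0 1)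
    {h : ℝ → ℝ} (hh : ∀ x, AnalyticAt ℝ h x) (c : ℝ) : AnalyticAt ℝ (dilationIntegral w h) c := by
  obtain ⟨U, F, hU, hRU, hF, hFh⟩ := exists_complex_extension_of_analyticAt hh
  have hnear : ∀ᶠ z : ℂ in 𝓝 (c:ℂ), ∀ t ∈ Icc (0:ℝ) 1, z * t ∈ U :=
    isCompact_Icc.eventually_forall_of_forall_eventually fun t _ =>
      (by fun_prop : Continuous fun p : ℂ × ℝ => p.1 * p.2).continuousAt.eventually
        (hU.mem_nhds (by simpa [← Complex.ofReal_mul] using hRU (c * t)))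
  have hwℂ : IntervalIntegrable (fun t => (w t : ℂ)) volume 0 1 := ⟨hw.1.ofReal, hw.2.ofReal⟩
  have hG : AnalyticAt ℂ (dilationIntegral (fun t => (w t : ℂ)) F) c :=
    Complex.analyticAt_iff_eventually_differentiableAt.2 <| hnear.mono fun z hz =>
      (hasDerivAt_dilationIntegral hwℂ hU hF.contDiffOn_of_completeSpace hz).differentiableAt
  have hre : dilationIntegral w h =
      fun x : ℝ => (dilationIntegral (fun t => (w t : ℂ)) F x).re := by
    ext x
    simp [dilationIntegral, ← Complex.ofReal_mul, hFh, intervalIntegral.integral_ofReal]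
  rw [hre]
  exact hG.re_ofReal

theorem eq_zero_of_forall_iteratedDeriv_eq_zero {f : ℝ → ℝ} (hf : ∀ x, AnalyticAt ℝ f x)
    {x₀ : ℝ} (h : ∀ n, iteratedDeriv n f x₀ = 0) : f = 0 :=
  (AnalyticOnNhd.analyticOrderAt_eq_top_iff_eq_zero x₀ hf).1 <|
    ENat.eq_top_iff_forall_ge.2 fun _ =>
      (natCast_le_analyticOrderAt_iff_iteratedDeriv_eq_zero (hf x₀)).2 fun i _ => h i

theorem eq_zero_of_dilationIntegral_eventuallyEq_zero {w : ℝ → ℝ}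
    (hw : IntervalIntegrable w volume 0 1) (hmom : ∀ n : ℕ, ∫ t in (0:ℝ)..1, t ^ n * w t ≠ 0)
    {h : ℝ → ℝ} (hh : ∀ x, AnalyticAt ℝ h x) {c₀ : ℝ} (h₀ : dilationIntegral w h =ᶠ[𝓝 c₀] 0) :
    h = 0 := by
  have hg : dilationIntegral w h = 0 :=
    (AnalyticOnNhd.analyticOrderAt_eq_top_iff_eq_zero c₀ (analyticAt_dilationIntegral hw hh)).1
      (analyticOrderAt_eq_top.2 h₀)
  refine eq_zero_of_forall_iteratedDeriv_eq_zero hh (x₀ := 0) fun n => ?_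
  have hn := congrFun
    (iteratedDeriv_dilationIntegral hw (AnalyticOnNhd.contDiff fun x _ => hh x) n) 0
  rw [hg, dilationIntegral_zero] at hn
  simpa [hmom n] using hn.symm

theorem intervalIntegrable_inv_sqrt_one_sub_sq :
    IntervalIntegrable (fun t : ℝ => (√(1 - t ^ 2))⁻¹) volume 0 1 := by
  refine intervalIntegrable_deriv_of_nonneg continuous_arcsin.continuousOn (fun t ht => ?_)
    fun t _ => by positivity
  simp only [zero_le_one, min_eq_left, max_eq_right, mem_Ioo] at ht
  simpa [one_div] using hasDerivAt_arcsin (by linarith) ht.2.ne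

theorem intervalIntegral_div_sqrt_sq_sub_sq {c : ℝ} (hc : 0 < c) (f : ℝ → ℝ) :
    ∫ s in (0:ℝ)..c, f s / √(c ^ 2 - s ^ 2) =
      dilationIntegral (fun t => (√(1 - t ^ 2))⁻¹) f c := by
  have hsub := intervalIntegral.integral_comp_mul_left (fun s => f s / √(c ^ 2 - s ^ 2)) hc.ne'
    (a := 0) (b := 1)
  simp only [mul_zero, mul_one, smul_eq_mul] at hsub
  rw [← mul_inv_cancel_left₀ hc.ne' (∫ s in (0:ℝ)..c, _), ← hsub, dilationIntegral,
    ← intervalIntegral.integral_const_mul]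
  refine integral_congr fun t _ => ?_
  have : √(c ^ 2 - (c * t) ^ 2) = c * √(1 - t ^ 2) := by
    rw [show c ^ 2 - (c * t) ^ 2 = c ^ 2 * (1 - t ^ 2) by ring, sqrt_mul (sq_nonneg c),
      sqrt_sq hc.le]
  simp only [this, RCLike.ofReal_real_eq_id, id]
  field_simp

theorem intervalIntegral_pow_mul_inv_sqrt_one_sub_sq_pos (n : ℕ) :
    0 < ∫ t in (0:ℝ)..1, t ^ n * (√(1 - t ^ 2))⁻¹ :=
  intervalIntegral_pos_of_pos_on
    (intervalIntegrable_inv_sqrt_one_sub_sq.continuousOn_mul (by fun_prop))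
    (fun t ht => mul_pos (pow_pos ht.1 n) (inv_pos.2 (sqrt_pos.2 (by nlinarith [ht.1, ht.2]))))
    zero_lt_one

theorem eq_zero_of_sqrt_sq_sub_one_mul_eq_const {g : ℝ → ℝ} (hg : ContinuousAt g 1) {K : ℝ}
    (hK : ∀ c > (1:ℝ), √(c ^ 2 - 1) * g c = K) : ∀ c > (1:ℝ), g c = 0 := by
  have hlim : Tendsto (fun c => √(c ^ 2 - 1) * g c) (𝓝[>] 1) (𝓝 0) := by
    simpa using ((by fun_prop : ContinuousAt (fun c => √(c ^ 2 - 1) * g c) 1).tendsto).mono_left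
      nhdsWithin_le_nhds
  have hconst : Tendsto (fun c => √(c ^ 2 - 1) * g c) (𝓝[>] 1) (𝓝 K) :=
    tendsto_const_nhds.congr' <| eventually_nhdsWithin_of_forall fun c hc => (hK c hc).symm
  intro c hc
  have hpos : 0 < √(c ^ 2 - 1) := sqrt_pos.2 (by nlinarith)
  simpa [tendsto_nhds_unique hconst hlim, hpos.ne'] using hK c hc

theorem stmt_6_general (h : ℝ → ℝ) (hanalytic : ∀ x : ℝ, AnalyticAt ℝ h x)
    (K : ℝ)
    (hH : ∀ c > (1:ℝ),
      (∫ s in (0:ℝ)..c, Real.sqrt (c ^ 2 - 1) * h s / Real.sqrt (c ^ 2 - s ^ 2)) = K) :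
    ∀ x, h x = 0 := by
  set g := dilationIntegral (fun t => (√(1 - t ^ 2))⁻¹) h with hg_def
  have hgK : ∀ c > (1:ℝ), √(c ^ 2 - 1) * g c = K := fun c hc => by
    rw [← hH c hc, hg_def, ← intervalIntegral_div_sqrt_sq_sub_sq (by linarith),
      ← intervalIntegral.integral_const_mul]
    simp only [mul_div_assoc]
  have hg : ∀ c > (1:ℝ), g c = 0 := eq_zero_of_sqrt_sq_sub_one_mul_eq_const
    (analyticAt_dilationIntegral intervalIntegrable_inv_sqrt_one_sub_sq hanalytic 1).continuousAt
    hgK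
  exact congrFun <| eq_zero_of_dilationIntegral_eventuallyEq_zero
    intervalIntegrable_inv_sqrt_one_sub_sq
    (fun n => (intervalIntegral_pow_mul_inv_sqrt_one_sub_sq_pos n).ne') hanalytic
    (eventually_of_mem (Ioi_mem_nhds one_lt_two) hg)

/-- If `h` is real-analytic and `∫₀^c √(c²−1)·h(s)/√(c²−s²) ds` is constant on
`(1,∞)`, then `h = 0`. -/
theorem stmt_6 (h : ℝ → ℝ) (hanalytic : ∀ x : ℝ, AnalyticAt ℝ h x)
    (hint : ∀ c > (1:ℝ), IntervalIntegrable
      (fun s => Real.sqrt (c ^ 2 - 1) * h s / Real.sqrt (c ^ 2 - s ^ 2)) volume 0 c)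
    (K : ℝ)
    (hH : ∀ c > (1:ℝ),
      (∫ s in (0:ℝ)..c, Real.sqrt (c ^ 2 - 1) * h s / Real.sqrt (c ^ 2 - s ^ 2)) = K) :
    ∀ x, h x = 0 :=
  stmt_6_general h hanalytic K hH
end

section
/- Let f : ℝ → ℝ be continuous with 1 − y²·f(y) > 0 for all y, and c > 0. Then the improper integral ∫_{−c}^{c} (c·√(1−y²f(y)) − √(c²−y²))/(y²·√(c²−y²)) dy converges. -/
open MeasureTheory Real

lemma abs_sqrt_sub_one_le {a : ℝ} (ha : 0 ≤ a) : |Real.sqrt a - 1| ≤ |a - 1| := by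
  have hs := Real.sqrt_nonneg a
  have hsq := Real.sq_sqrt ha
  rcases le_or_gt 1 a with h | h
  · have h1 : 1 ≤ Real.sqrt a := by
      rw [show (1:ℝ) = Real.sqrt 1 by simp]; exact Real.sqrt_le_sqrt h
    rw [abs_of_nonneg (by linarith), abs_of_nonneg (by linarith)]
    nlinarith
  · have h1 : Real.sqrt a ≤ 1 := by
      rw [show (1:ℝ) = Real.sqrt 1 by simp]; exact Real.sqrt_le_sqrt h.le
    rw [abs_of_nonpos (by linarith), abs_of_nonpos (by linarith)]
    nlinarith

/-- Parabolic case: convergence of the closing integral. -/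
theorem stmt_9 (f : ℝ → ℝ) (hf : Continuous f)
    (hpos : ∀ y, 1 - y ^ 2 * f y > 0) (c : ℝ) (hc : 0 < c) :
    IntegrableOn
      (fun y => (c * Real.sqrt (1 - y ^ 2 * f y) - Real.sqrt (c ^ 2 - y ^ 2))
        / (y ^ 2 * Real.sqrt (c ^ 2 - y ^ 2))) (Set.Ioo (-c) c) volume := by
  -- bound on |f| on [-c,c]
  obtain ⟨M, hM⟩ := (isCompact_Icc (a := -c) (b := c)).exists_bound_of_continuousOn
    hf.continuousOn
  have hM0 : 0 ≤ M := le_trans (norm_nonneg _) (hM 0 ⟨by linarith, by linarith⟩)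
  set C : ℝ := c * M + 1 / c with hC
  have hC0 : 0 ≤ C := by positivity
  set K : ℝ := C / Real.sqrt c with hK
  have hK0 : 0 ≤ K := by positivity
  -- integrability of the majorant
  have hg_int : IntegrableOn
      (fun y => K * ((c - y) ^ (-(1/2) : ℝ) + (c + y) ^ (-(1/2) : ℝ)))
      (Set.Ioo (-c) c) volume := by
    rw [← intervalIntegrable_iff_integrableOn_Ioo_of_le (by linarith)]
    have h1 : IntervalIntegrable (fun x : ℝ => x ^ (-(1/2) : ℝ)) volume 0 (2 * c) :=
      intervalIntegral.intervalIntegrable_rpow' (by norm_num)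
    have h2 : IntervalIntegrable (fun x : ℝ => (c - x) ^ (-(1/2) : ℝ)) volume (-c) c := by
      have h := (h1.comp_sub_left c).symm
      rw [show c - 2 * c = -c by ring, sub_zero] at h
      exact h
    have h3 : IntervalIntegrable (fun x : ℝ => (c + x) ^ (-(1/2) : ℝ)) volume (-c) c := by
      have h := h1.comp_add_left c
      rw [show (0:ℝ) - c = -c by ring, show 2 * c - c = c by ring] at h
      exact h
    exact ((h2.add h3).const_mul K)
  -- measurability
  have hmeas : AEStronglyMeasurable
      (fun y => (c * Real.sqrt (1 - y ^ 2 * f y) - Real.sqrt (c ^ 2 - y ^ 2))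
        / (y ^ 2 * Real.sqrt (c ^ 2 - y ^ 2))) (volume.restrict (Set.Ioo (-c) c)) := by
    apply Measurable.aestronglyMeasurable
    apply Measurable.div
    · exact ((continuous_const.mul (Real.continuous_sqrt.comp
        (continuous_const.sub ((continuous_pow 2).mul hf)))).sub
        (Real.continuous_sqrt.comp (continuous_const.sub (continuous_pow 2)))).measurable
    · exact ((continuous_pow 2).mul (Real.continuous_sqrt.comp
        (continuous_const.sub (continuous_pow 2)))).measurable
  -- the pointwise bound
  apply Integrable.mono' hg_int hmeas
  filter_upwards [ae_restrict_mem measurableSet_Ioo] with y hy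
  obtain ⟨hy1, hy2⟩ := hy
  have hcy1 : 0 ≤ c - y := by linarith
  have hcy2 : 0 ≤ c + y := by linarith
  have hsub : 0 ≤ c ^ 2 - y ^ 2 := by nlinarith
  have hg1 : 0 ≤ (c - y) ^ (-(1/2) : ℝ) := Real.rpow_nonneg hcy1 _
  have hg2 : 0 ≤ (c + y) ^ (-(1/2) : ℝ) := Real.rpow_nonneg hcy2 _
  rcases eq_or_ne y 0 with rfl | hy0
  · simp only [ne_eq, OfNat.ofNat_ne_zero, not_false_eq_true, zero_pow, zero_mul, div_zero,
      norm_zero]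
    positivity
  -- numerator bound
  have hy2pos : 0 < y ^ 2 := by positivity
  have ha := (hpos y).le
  have hb : Real.sqrt (c ^ 2 - y ^ 2) ≤ c := by
    have := Real.sqrt_le_sqrt (show c ^ 2 - y ^ 2 ≤ c ^ 2 by nlinarith)
    rwa [Real.sqrt_sq hc.le] at this
  have hbsq : Real.sqrt (c ^ 2 - y ^ 2) ^ 2 = c ^ 2 - y ^ 2 := Real.sq_sqrt hsub
  have hb0 : 0 ≤ Real.sqrt (c ^ 2 - y ^ 2) := Real.sqrt_nonneg _
  have hnum : |c * Real.sqrt (1 - y ^ 2 * f y) - Real.sqrt (c ^ 2 - y ^ 2)| ≤ C * y ^ 2 := by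
    have e1 : |c * (Real.sqrt (1 - y ^ 2 * f y) - 1)| ≤ c * M * y ^ 2 := by
      rw [abs_mul, abs_of_pos hc]
      have h1 := abs_sqrt_sub_one_le ha
      have h2 : |1 - y ^ 2 * f y - 1| = y ^ 2 * |f y| := by
        rw [show 1 - y ^ 2 * f y - 1 = -(y ^ 2 * f y) by ring, abs_neg, abs_mul,
          abs_of_pos hy2pos]
      have hfy : |f y| ≤ M := hM y ⟨by linarith, by linarith⟩
      rw [h2] at h1
      calc c * |Real.sqrt (1 - y ^ 2 * f y) - 1| ≤ c * (y ^ 2 * |f y|) :=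
            mul_le_mul_of_nonneg_left h1 hc.le
        _ ≤ c * M * y ^ 2 := by
            have := mul_le_mul_of_nonneg_left hfy (by positivity : (0:ℝ) ≤ c * y ^ 2)
            nlinarith
    have e2 : |c - Real.sqrt (c ^ 2 - y ^ 2)| ≤ y ^ 2 / c := by
      rw [abs_of_nonneg (by linarith), le_div_iff₀ hc]
      nlinarith
    calc |c * Real.sqrt (1 - y ^ 2 * f y) - Real.sqrt (c ^ 2 - y ^ 2)|
        = |c * (Real.sqrt (1 - y ^ 2 * f y) - 1) + (c - Real.sqrt (c ^ 2 - y ^ 2))| := by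
          ring_nf
      _ ≤ |c * (Real.sqrt (1 - y ^ 2 * f y) - 1)| + |c - Real.sqrt (c ^ 2 - y ^ 2)| :=
          abs_add_le _ _
      _ ≤ c * M * y ^ 2 + y ^ 2 / c := by linarith
      _ = C * y ^ 2 := by rw [hC]; ring
  -- denominator positivity
  have hsubpos : 0 < c ^ 2 - y ^ 2 := by nlinarith
  have hbpos : 0 < Real.sqrt (c ^ 2 - y ^ 2) := Real.sqrt_pos.mpr hsubpos
  have key : ‖(c * Real.sqrt (1 - y ^ 2 * f y) - Real.sqrt (c ^ 2 - y ^ 2))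
      / (y ^ 2 * Real.sqrt (c ^ 2 - y ^ 2))‖ ≤ C / Real.sqrt (c ^ 2 - y ^ 2) := by
    rw [Real.norm_eq_abs, abs_div,
      abs_of_pos (by positivity : (0:ℝ) < y ^ 2 * Real.sqrt (c ^ 2 - y ^ 2)),
      div_le_div_iff₀ (by positivity) hbpos]
    calc |c * Real.sqrt (1 - y ^ 2 * f y) - Real.sqrt (c ^ 2 - y ^ 2)| *
          Real.sqrt (c ^ 2 - y ^ 2)
        ≤ (C * y ^ 2) * Real.sqrt (c ^ 2 - y ^ 2) := mul_le_mul_of_nonneg_right hnum hb0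
      _ = C * (y ^ 2 * Real.sqrt (c ^ 2 - y ^ 2)) := by ring
  refine key.trans ?_
  -- final: C / sqrt(c^2 - y^2) ≤ g y
  have hsplit : Real.sqrt (c ^ 2 - y ^ 2) = Real.sqrt (c - y) * Real.sqrt (c + y) := by
    rw [← Real.sqrt_mul hcy1]; ring_nf
  have hrw1 : (c - y) ^ (-(1/2) : ℝ) = 1 / Real.sqrt (c - y) := by
    rw [Real.rpow_neg hcy1, Real.sqrt_eq_rpow]
    exact (one_div _).symm
  have hrw2 : (c + y) ^ (-(1/2) : ℝ) = 1 / Real.sqrt (c + y) := by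
    rw [Real.rpow_neg hcy2, Real.sqrt_eq_rpow]
    exact (one_div _).symm
  have hsc : 0 < Real.sqrt c := Real.sqrt_pos.mpr hc
  rcases le_or_gt 0 y with hsign | hsign
  · -- c + y ≥ c, bound by (c-y)^{-1/2} term
    have hcyp : 0 < c - y := by linarith
    have hscy : 0 < Real.sqrt (c - y) := Real.sqrt_pos.mpr hcyp
    have h1 : Real.sqrt c * Real.sqrt (c - y) ≤ Real.sqrt (c ^ 2 - y ^ 2) := by
      rw [hsplit, mul_comm]
      exact mul_le_mul_of_nonneg_left (Real.sqrt_le_sqrt (by linarith)) hscy.le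
    have h2 : C / Real.sqrt (c ^ 2 - y ^ 2) ≤ C / (Real.sqrt c * Real.sqrt (c - y)) :=
      div_le_div_of_nonneg_left hC0 (by positivity) h1
    have h3 : C / (Real.sqrt c * Real.sqrt (c - y)) = K * (c - y) ^ (-(1/2) : ℝ) := by
      rw [hrw1, hK]; field_simp
    refine h2.trans ?_
    rw [h3]
    exact mul_le_mul_of_nonneg_left (le_add_of_nonneg_right hg2) hK0
  · have hcyp : 0 < c + y := by linarith
    have hscy : 0 < Real.sqrt (c + y) := Real.sqrt_pos.mpr hcyp
    have h1 : Real.sqrt c * Real.sqrt (c + y) ≤ Real.sqrt (c ^ 2 - y ^ 2) := by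
      rw [hsplit]
      exact mul_le_mul_of_nonneg_right (Real.sqrt_le_sqrt (by linarith)) hscy.le
    have h2 : C / Real.sqrt (c ^ 2 - y ^ 2) ≤ C / (Real.sqrt c * Real.sqrt (c + y)) :=
      div_le_div_of_nonneg_left hC0 (by positivity) h1
    have h3 : C / (Real.sqrt c * Real.sqrt (c + y)) = K * (c + y) ^ (-(1/2) : ℝ) := by
      rw [hrw2, hK]; field_simp
    refine h2.trans ?_
    rw [h3]
    exact mul_le_mul_of_nonneg_left (le_add_of_nonneg_left hg1) hK0
end

section
/- Let f : ℝ → ℝ be continuous with 1 − (y²−1)·f(y) > 0 for all y, and let c > 1. Then: (i) for 1 < y₀ < c the improper integral ∫₁^{y₀} (−√(c²−1)·√(1−(y²−1)f(y)) − √(c²−y²))/((y²−1)·√(c²−y²)) dy diverges to −∞; (ii) the improper integral ∫_{−c}^{c} (√(c²−1)·√(1−(y²−1)f(y)) − √(c²−y²))/((y²−1)·√(c²−y²)) dy converges. -/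
/-!
(i) On `(1, y₀]` the numerator is at most `-√(c² - y₀²) < 0` while the denominator is at most
a constant times `y - 1`, so the integrand is dominated by `-A / (y - 1)`, whose integral from
`1 + ε` is `A log ε + const → -∞`.

(ii) Multiplying by the conjugate `√(c²-1)·√(1-(y²-1)f y) + √(c²-y²)` cancels the factor
`y² - 1`: off `y = ±1` the integrand equals a continuous function times `(√(c² - y²))⁻¹`, and the
latter is integrable on `(-c, c)` as the derivative of the increasing function `arcsin (y / c)`.
-/

open MeasureTheory intervalIntegral Real Filter Set

theorem tendsto_integral_nhdsGT_atBot_of_le_neg_div {g : ℝ → ℝ} {a b A : ℝ} (hab : a < b)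
    (hA : 0 < A) (hg : ContinuousOn g (Ioc a b)) (hle : ∀ y ∈ Ioc a b, g y ≤ -A / (y - a)) :
    Tendsto (fun ε => ∫ y in (a + ε)..b, g y) (nhdsWithin 0 (Ioi 0)) atBot := by
  have hlog : Tendsto (fun ε => A * log ε - A * log (b - a)) (nhdsWithin 0 (Ioi 0)) atBot :=
    tendsto_atBot_add_const_right _ _ (tendsto_log_nhdsGT_zero.const_mul_atBot hA)
  refine tendsto_atBot_mono' _ ?_ hlog
  filter_upwards [Ioo_mem_nhdsGT (sub_pos.2 hab)] with ε ⟨hε, hεb⟩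
  have hsub : Icc (a + ε) b ⊆ Ioc a b := fun y hy => ⟨by linarith [hy.1], hy.2⟩
  have hbound : ContinuousOn (fun y => -A / (y - a)) (Icc (a + ε) b) :=
    continuousOn_const.div (by fun_prop) fun y hy => by linarith [hy.1]
  calc ∫ y in (a + ε)..b, g y ≤ ∫ y in (a + ε)..b, -A / (y - a) :=
        integral_mono_on (by linarith) ((hg.mono hsub).intervalIntegrable_of_Icc (by linarith))
          (hbound.intervalIntegrable_of_Icc (by linarith)) fun y hy => hle y (hsub hy)
    _ = A * log ε - A * log (b - a) := by
        simp only [div_eq_mul_inv]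
        rw [intervalIntegral.integral_const_mul, integral_comp_sub_right (fun x => x⁻¹),
          add_sub_cancel_left, integral_inv_of_pos hε (sub_pos.2 hab),
          log_div (sub_pos.2 hab).ne' hε.ne']
        ring

theorem neg_sub_sqrt_div_le {c y₀ y s : ℝ} (hs : 0 ≤ s) (hy₀ : y₀ < c) (hy : y ∈ Ioc 1 y₀) :
    (-s - √(c ^ 2 - y ^ 2)) / ((y ^ 2 - 1) * √(c ^ 2 - y ^ 2))
      ≤ -(√(c ^ 2 - y₀ ^ 2) / ((y₀ + 1) * c)) / (y - 1) := by
  obtain ⟨hy1, hyy₀⟩ := hy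
  have hc : 0 < c := by linarith
  have hB : 0 < √(c ^ 2 - y ^ 2) := sqrt_pos.2 (by nlinarith)
  have hδB : √(c ^ 2 - y₀ ^ 2) ≤ √(c ^ 2 - y ^ 2) := sqrt_le_sqrt (by nlinarith)
  have hBc : √(c ^ 2 - y ^ 2) ≤ c := sqrt_le_iff.2 ⟨hc.le, by nlinarith⟩
  have hD : 0 < (y ^ 2 - 1) * √(c ^ 2 - y ^ 2) := mul_pos (by nlinarith) hB
  have hDle : (y ^ 2 - 1) * √(c ^ 2 - y ^ 2) ≤ (y₀ + 1) * c * (y - 1) := by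
    have : y ^ 2 - 1 ≤ (y₀ + 1) * (y - 1) := by nlinarith
    calc (y ^ 2 - 1) * √(c ^ 2 - y ^ 2) ≤ (y ^ 2 - 1) * c := by gcongr; nlinarith
      _ ≤ (y₀ + 1) * c * (y - 1) := by nlinarith [mul_le_mul_of_nonneg_left this hc.le]
  calc (-s - √(c ^ 2 - y ^ 2)) / ((y ^ 2 - 1) * √(c ^ 2 - y ^ 2))
      ≤ -√(c ^ 2 - y₀ ^ 2) / ((y ^ 2 - 1) * √(c ^ 2 - y ^ 2)) :=
        div_le_div_of_nonneg_right (by linarith) hD.le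
    _ ≤ -√(c ^ 2 - y₀ ^ 2) / ((y₀ + 1) * c * (y - 1)) := by
        simp only [neg_div, neg_le_neg_iff]
        exact div_le_div_of_nonneg_left (sqrt_nonneg _) hD hDle
    _ = -(√(c ^ 2 - y₀ ^ 2) / ((y₀ + 1) * c)) / (y - 1) := by
        rw [neg_div, neg_div, div_div]

theorem integrableOn_inv_sqrt_sq_sub_sq {c : ℝ} (hc : 0 < c) :
    IntegrableOn (fun y => (√(c ^ 2 - y ^ 2))⁻¹) (Ioc (-c) c) := by
  refine integrableOn_deriv_of_nonneg (g := fun y => arcsin (y / c)) (by fun_prop)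
    (fun y hy => ?_) fun y _ => inv_nonneg.2 (sqrt_nonneg _)
  have h1 : -1 < y / c := by rw [lt_div_iff₀ hc]; linarith [hy.1]
  have h2 : y / c < 1 := by rw [div_lt_iff₀ hc]; linarith [hy.2]
  refine ((hasDerivAt_arcsin h1.ne' h2.ne).comp y ((hasDerivAt_id y).div_const c)).congr_deriv ?_
  have : c ^ 2 - y ^ 2 = c ^ 2 * (1 - (y / c) ^ 2) := by field_simp
  rw [this, sqrt_mul (sq_nonneg c), sqrt_sq hc.le]
  field_simp

theorem sqrt_sub_sqrt_div_eq {c y t : ℝ} (hc : 1 ≤ c ^ 2) (ht : 0 ≤ 1 - (y ^ 2 - 1) * t)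
    (hy : y ^ 2 < c ^ 2) (hy1 : y ^ 2 ≠ 1) :
    (√(c ^ 2 - 1) * √(1 - (y ^ 2 - 1) * t) - √(c ^ 2 - y ^ 2)) / ((y ^ 2 - 1) * √(c ^ 2 - y ^ 2))
      = (1 - (c ^ 2 - 1) * t) / (√(c ^ 2 - 1) * √(1 - (y ^ 2 - 1) * t) + √(c ^ 2 - y ^ 2))
        * (√(c ^ 2 - y ^ 2))⁻¹ := by
  have hB : 0 < √(c ^ 2 - y ^ 2) := sqrt_pos.2 (by linarith)
  have hS : 0 < √(c ^ 2 - 1) * √(1 - (y ^ 2 - 1) * t) + √(c ^ 2 - y ^ 2) := by positivity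
  have hA2 : (√(c ^ 2 - 1) * √(1 - (y ^ 2 - 1) * t)) ^ 2 = (c ^ 2 - 1) * (1 - (y ^ 2 - 1) * t) := by
    rw [mul_pow, sq_sqrt (by linarith), sq_sqrt ht]
  have hB2 : √(c ^ 2 - y ^ 2) ^ 2 = c ^ 2 - y ^ 2 := sq_sqrt (by linarith)
  rw [← div_eq_mul_inv, div_div, div_eq_div_iff (mul_ne_zero (sub_ne_zero.2 hy1) hB.ne')
    (mul_ne_zero hS.ne' hB.ne')]
  linear_combination √(c ^ 2 - y ^ 2) * (hA2 - hB2)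

/-- Hyperbolic case: (i) the improper integral from `1` of the `−` integrand
diverges to `−∞`; (ii) the closing integrand is integrable on `(−c, c)`. -/
theorem stmt_14 (f : ℝ → ℝ) (hf : Continuous f)
    (hpos : ∀ y, 1 - (y ^ 2 - 1) * f y > 0)
    (c : ℝ) (hc : 1 < c) :
    (∀ y₀ : ℝ, 1 < y₀ → y₀ < c →
      Tendsto
        (fun ε => ∫ y in (1 + ε)..y₀,
          (-Real.sqrt (c ^ 2 - 1) * Real.sqrt (1 - (y ^ 2 - 1) * f y)
              - Real.sqrt (c ^ 2 - y ^ 2))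
            / ((y ^ 2 - 1) * Real.sqrt (c ^ 2 - y ^ 2)))
        (nhdsWithin 0 (Set.Ioi 0)) atBot) ∧
    IntegrableOn
      (fun y => (Real.sqrt (c ^ 2 - 1) * Real.sqrt (1 - (y ^ 2 - 1) * f y)
          - Real.sqrt (c ^ 2 - y ^ 2))
        / ((y ^ 2 - 1) * Real.sqrt (c ^ 2 - y ^ 2))) (Set.Ioo (-c) c) volume := by
  have hc0 : 0 < c := by linarith
  refine ⟨fun y₀ hy₀ hy₀c => ?_, ?_⟩
  · have hδ : 0 < √(c ^ 2 - y₀ ^ 2) := sqrt_pos.2 (by nlinarith)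
    refine tendsto_integral_nhdsGT_atBot_of_le_neg_div hy₀
      (A := √(c ^ 2 - y₀ ^ 2) / ((y₀ + 1) * c)) (by positivity) ?_
      fun y hy => by rw [neg_mul]; exact neg_sub_sqrt_div_le (by positivity) hy₀c hy
    exact ContinuousOn.div (by fun_prop) (by fun_prop) fun y hy =>
      (mul_pos (by nlinarith [hy.1]) (sqrt_pos.2 (by nlinarith [hy.1, hy.2]))).ne'
  · have hk : Continuous fun y => (1 - (c ^ 2 - 1) * f y)
        / (√(c ^ 2 - 1) * √(1 - (y ^ 2 - 1) * f y) + √(c ^ 2 - y ^ 2)) :=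
      Continuous.div (by fun_prop) (by fun_prop) fun y => (add_pos_of_pos_of_nonneg
        (mul_pos (sqrt_pos.2 (by nlinarith)) (sqrt_pos.2 (hpos y))) (sqrt_nonneg _)).ne'
    refine (IntegrableOn.continuousOn_mul_of_subset hk.continuousOn
      ((integrableOn_inv_sqrt_sq_sub_sq hc0).mono_set Ioo_subset_Ioc_self) isCompact_Icc
      measurableSet_Ioo Ioo_subset_Icc_self).congr_fun_ae ?_
    have hne : ∀ᵐ y : ℝ, y ^ 2 ≠ 1 := by
      have h1 : ∀ᵐ y : ℝ, y ≠ 1 := by simp [ae_iff]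
      have h2 : ∀ᵐ y : ℝ, y ≠ -1 := by simp [ae_iff]
      filter_upwards [h1, h2] with y hy1 hy2
      exact sq_eq_one_iff.not.2 (not_or.2 ⟨hy1, hy2⟩)
    filter_upwards [ae_restrict_mem measurableSet_Ioo, ae_restrict_of_ae hne] with y hy hy1
    exact (sqrt_sub_sqrt_div_eq (by nlinarith) (hpos y).le (by nlinarith [hy.1, hy.2]) hy1).symm
end
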